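/- arXiv:1906.10537 — 11 statements merged into one kernel-verified Lean document; each statement's English description precedes it below -/
import Mathlib

section
/- For every integer n ≥ 2 and all positive real numbers a and b, the determinant of D_n(a,b) satisfies the recurrence det D_n(a,b) = -a·det D_{n-1}(a,b) - a·b·det D_{n-2}(a,b) - b³·det D_{n-3}(a,b), where by convention det D_0(a,b) = 1 and det D_{-1}(a,b) = 0. -/
/-!
`D_n(a,b)` is the lower Hessenberg Toeplitz matrix `(t (i - j))` with `t 0 = -a`, `t (-1) = b`,
`t 1 = a`, `t 2 = -b` and `t d = 0` otherwise. Let `G_m^k` be the `m × m` Toeplitz matrix of `t`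
with its first column replaced by `(t k, t (k+1), …)`, so `G_m^0 = D_m`. Expanding along the
first row, which has only the two entries `t k`, `t (-1)`, gives
`det G_{m+2}^k = t k · det D_{m+1} - t (-1) · det G_{m+1}^{k+1}`.
Three steps of this recursion reach `G^3`, whose first column vanishes.
-/

/-- The `n × n` matrix `D_n(a,b)` (rows and columns indexed by `Fin n`, i.e. `0,…,n-1`):
column `j` has entry `-a` on the diagonal, `b` just above the diagonal,
`a` just below the diagonal and `-b` two below the diagonal. -/
def Dmat (n : ℕ) (a b : ℝ) : Matrix (Fin n) (Fin n) ℝ :=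
  Matrix.of fun i j =>
    if (i : ℕ) = (j : ℕ) then -a
    else if (i : ℕ) + 1 = (j : ℕ) then b
    else if (i : ℕ) = (j : ℕ) + 1 then a
    else if (i : ℕ) = (j : ℕ) + 2 then -b
    else 0

/-- `det D_m(a,b)` extended to integer indices, with the convention that
`det D_m(a,b) = 0` for `m < 0` (and `det D_0(a,b) = 1`, the determinant of the
empty matrix). -/
noncomputable def dZ (a b : ℝ) (m : ℤ) : ℝ :=
  if 0 ≤ m then (Dmat m.toNat a b).det else 0

open Matrix

section Toeplitz

variable {R : Type*} (t : ℤ → R)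

def toeplitz (m : ℕ) : Matrix (Fin m) (Fin m) R :=
  of fun i j => t ((i : ℤ) - j)

def toeplitzShiftedFirstCol (k : ℤ) (m : ℕ) : Matrix (Fin m) (Fin m) R :=
  of fun i j => if (j : ℕ) = 0 then t (i + k) else t ((i : ℤ) - j)

lemma toeplitzShiftedFirstCol_zero (m : ℕ) :
    toeplitzShiftedFirstCol t 0 m = toeplitz t m := by
  ext i j
  by_cases hj : (j : ℕ) = 0 <;> simp [toeplitzShiftedFirstCol, toeplitz, hj]

variable [CommRing R]

lemma det_toeplitzShiftedFirstCol_one (k : ℤ) :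
    (toeplitzShiftedFirstCol t k 1).det = t k := by
  simp [toeplitzShiftedFirstCol]

lemma det_toeplitzShiftedFirstCol_succ_eq_zero {k : ℤ} (hk : ∀ i : ℕ, t (i + k) = 0) (m : ℕ) :
    (toeplitzShiftedFirstCol t k (m + 1)).det = 0 :=
  det_eq_zero_of_column_eq_zero 0 fun i => by simp [toeplitzShiftedFirstCol, hk]

lemma det_toeplitzShiftedFirstCol_succ_succ (ht : ∀ d ≤ -2, t d = 0) (k : ℤ) (m : ℕ) :
    (toeplitzShiftedFirstCol t k (m + 2)).det =
      t k * (toeplitz t (m + 1)).det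
        - t (-1) * (toeplitzShiftedFirstCol t (k + 1) (m + 1)).det := by
  rw [det_succ_row_zero, Fin.sum_univ_succ, Fin.sum_univ_succ, Fin.succ_zero_eq_one]
  have hrow : ∀ j : Fin m, toeplitzShiftedFirstCol t k (m + 2) 0 j.succ.succ = 0 := fun j => by
    simp only [toeplitzShiftedFirstCol, of_apply, Fin.val_succ, Fin.val_zero,
      Nat.add_one_ne_zero, if_false]
    exact ht _ (by omega)
  have hminor₀ : (toeplitzShiftedFirstCol t k (m + 2)).submatrix Fin.succ (Fin.succAbove 0) =
      toeplitz t (m + 1) := by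
    ext i j
    simp [toeplitzShiftedFirstCol, toeplitz]
  have hminor₁ : (toeplitzShiftedFirstCol t k (m + 2)).submatrix Fin.succ (Fin.succAbove 1) =
      toeplitzShiftedFirstCol t (k + 1) (m + 1) := by
    ext i j
    induction j using Fin.cases with
    | zero => simp [toeplitzShiftedFirstCol, add_assoc, add_comm 1 k]
    | succ j => simp [toeplitzShiftedFirstCol]
  have h₀₀ : toeplitzShiftedFirstCol t k (m + 2) 0 0 = t k := by simp [toeplitzShiftedFirstCol]
  have h₀₁ : toeplitzShiftedFirstCol t k (m + 2) 0 1 = t (-1) := by simp [toeplitzShiftedFirstCol]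
  simp only [hrow, h₀₀, h₀₁, hminor₀, hminor₁, mul_zero, zero_mul,
    Finset.sum_const_zero, add_zero, Fin.val_zero, Fin.val_one, pow_zero, pow_one]
  ring

end Toeplitz

def DmatSymbol (a b : ℝ) (d : ℤ) : ℝ :=
  if d = 0 then -a else if d = -1 then b else if d = 1 then a else if d = 2 then -b else 0

section DmatSymbol

variable (a b : ℝ)

@[simp] lemma DmatSymbol_zero : DmatSymbol a b 0 = -a := by simp [DmatSymbol]
@[simp] lemma DmatSymbol_neg_one : DmatSymbol a b (-1) = b := by simp [DmatSymbol]
@[simp] lemma DmatSymbol_one : DmatSymbol a b 1 = a := by simp [DmatSymbol]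
@[simp] lemma DmatSymbol_two : DmatSymbol a b 2 = -b := by simp [DmatSymbol]

lemma DmatSymbol_eq_zero_of_le {d : ℤ} (hd : d ≤ -2) : DmatSymbol a b d = 0 := by
  simp only [DmatSymbol]
  split_ifs <;> first | rfl | omega

lemma DmatSymbol_eq_zero_of_three_le {d : ℤ} (hd : 3 ≤ d) : DmatSymbol a b d = 0 := by
  simp only [DmatSymbol]
  split_ifs <;> first | rfl | omega

end DmatSymbol

lemma Dmat_eq_toeplitz (n : ℕ) (a b : ℝ) : Dmat n a b = toeplitz (DmatSymbol a b) n := by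
  ext i j
  simp only [Dmat, toeplitz, DmatSymbol, of_apply]
  split_ifs <;> first | rfl | omega

lemma dZ_natCast (a b : ℝ) (m : ℕ) : dZ a b m = (Dmat m a b).det := by
  simp [dZ]

lemma dZ_neg_one (a b : ℝ) : dZ a b (-1) = 0 := by
  simp [dZ]

lemma det_Dmat_succ_succ (a b : ℝ) (m : ℕ) :
    (Dmat (m + 2) a b).det = -a * (Dmat (m + 1) a b).det
      - b * (toeplitzShiftedFirstCol (DmatSymbol a b) 1 (m + 1)).det := by
  rw [Dmat_eq_toeplitz, Dmat_eq_toeplitz, ← toeplitzShiftedFirstCol_zero,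
    det_toeplitzShiftedFirstCol_succ_succ _ (fun _ => DmatSymbol_eq_zero_of_le a b), zero_add,
    DmatSymbol_zero, DmatSymbol_neg_one]

lemma det_toeplitzShiftedFirstCol_DmatSymbol_two (a b : ℝ) (m : ℕ) :
    (toeplitzShiftedFirstCol (DmatSymbol a b) 2 (m + 1)).det = -b * (Dmat m a b).det := by
  rcases m with _ | m
  · rw [det_toeplitzShiftedFirstCol_one, DmatSymbol_two, det_fin_zero, mul_one]
  · rw [det_toeplitzShiftedFirstCol_succ_succ _ (fun _ => DmatSymbol_eq_zero_of_le a b),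
      det_toeplitzShiftedFirstCol_succ_eq_zero _
        (fun i => DmatSymbol_eq_zero_of_three_le a b (by omega)),
      Dmat_eq_toeplitz, DmatSymbol_two]
    ring

lemma det_toeplitzShiftedFirstCol_DmatSymbol_one (a b : ℝ) (m : ℕ) :
    (toeplitzShiftedFirstCol (DmatSymbol a b) 1 (m + 1)).det =
      a * dZ a b m + b ^ 2 * dZ a b ((m : ℤ) - 1) := by
  rcases m with _ | m
  · rw [det_toeplitzShiftedFirstCol_one, DmatSymbol_one, dZ_natCast, Nat.cast_zero, zero_sub,
      dZ_neg_one, det_fin_zero]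
    ring
  · rw [det_toeplitzShiftedFirstCol_succ_succ _ (fun _ => DmatSymbol_eq_zero_of_le a b),
      one_add_one_eq_two, det_toeplitzShiftedFirstCol_DmatSymbol_two, ← Dmat_eq_toeplitz,
      Nat.cast_succ, add_sub_cancel_right, ← Nat.cast_succ, dZ_natCast, dZ_natCast,
      DmatSymbol_one, DmatSymbol_neg_one]
    ring

theorem stmt0_general (a b : ℝ) (n : ℕ) (hn : 2 ≤ n) :
    (Dmat n a b).det =
      -a * dZ a b ((n : ℤ) - 1) - a * b * dZ a b ((n : ℤ) - 2)
        - b ^ 3 * dZ a b ((n : ℤ) - 3) := by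
  obtain ⟨m, rfl⟩ : ∃ m, n = m + 2 := ⟨n - 2, by omega⟩
  rw [det_Dmat_succ_succ, det_toeplitzShiftedFirstCol_DmatSymbol_one,
    show ((m + 2 : ℕ) : ℤ) - 1 = (m + 1 : ℕ) by push_cast; ring,
    show ((m + 2 : ℕ) : ℤ) - 2 = m by push_cast; ring,
    show ((m + 2 : ℕ) : ℤ) - 3 = m - 1 by push_cast; ring, dZ_natCast, dZ_natCast]
  ring

theorem stmt0 (a b : ℝ) (ha : 0 < a) (hb : 0 < b) (n : ℕ) (hn : 2 ≤ n) :
    (Dmat n a b).det =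
      -a * dZ a b ((n : ℤ) - 1) - a * b * dZ a b ((n : ℤ) - 2)
        - b ^ 3 * dZ a b ((n : ℤ) - 3) :=
  stmt0_general a b n hn
end

section
/- For every positive real number a and every integer k ≥ 0, d_k equals (1/k!) times the k-th derivative at x = 0 of the function f(x) = 1/(1 + a·x + a·x² + x³), i.e. d_k = f^{(k)}(0)/k!. -/
/-!
Expanding `det D_{n+3}(a,b)` along its first column, whose only nonzero entries are `-a, a, -b`,
gives `d_{n+3} = -a d_{n+2} - a b d_{n+1} - b³ d_n`: the two minors other than `D_{n+2}` are
block triangular with leading entries `b`. This is exactly the recurrence satisfied by the Taylor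
coefficients `c_n` of `1 / (1 + a x + a b x² + b³ x³)`, since multiplying the series by the
denominator must give `1`. The coefficients grow at most geometrically, so the series `∑ c_n xⁿ`
converges near `0` and is the power series of the function there; hence `c_k = f⁽ᵏ⁾(0) / k!`.
-/

theorem Matrix.det_succ_of_row_zero_tail_eq_zero {R : Type*} [CommRing R] {n : ℕ}
    (A : Matrix (Fin (n + 1)) (Fin (n + 1)) R) (h : ∀ j : Fin n, A 0 j.succ = 0) :
    A.det = A 0 0 * (A.submatrix Fin.succ Fin.succ).det := by
  simp [det_succ_row_zero, Fin.sum_univ_succ, h]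

section InvCubic

variable {𝕜 : Type*} [NontriviallyNormedField 𝕜] (p q r : 𝕜)

def invCubicCoeff : ℕ → 𝕜
  | 0 => 1
  | 1 => -p
  | 2 => p ^ 2 - q
  | n + 3 => -p * invCubicCoeff (n + 2) - q * invCubicCoeff (n + 1) - r * invCubicCoeff n

theorem norm_invCubicCoeff_le (n : ℕ) :
    ‖invCubicCoeff p q r n‖ ≤ (1 + ‖p‖ + ‖q‖ + ‖r‖) ^ n := by
  set M := 1 + ‖p‖ + ‖q‖ + ‖r‖
  have hM : 1 ≤ M := by simp only [M]; linarith [norm_nonneg p, norm_nonneg q, norm_nonneg r]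
  induction n using invCubicCoeff.induct with
  | case1 => simp [invCubicCoeff]
  | case2 =>
    simp only [invCubicCoeff, norm_neg, pow_one, M]
    linarith [norm_nonneg q, norm_nonneg r]
  | case3 =>
    calc ‖p ^ 2 - q‖ ≤ ‖p‖ ^ 2 + ‖q‖ := (norm_sub_le _ _).trans_eq (by rw [norm_pow])
      _ ≤ M ^ 2 := by nlinarith [norm_nonneg p, norm_nonneg q, norm_nonneg r]
  | case4 n ih₀ ih₁ ih₂ =>
    set c := invCubicCoeff p q r
    calc ‖c (n + 3)‖ ≤ ‖p‖ * ‖c (n + 2)‖ + ‖q‖ * ‖c (n + 1)‖ + ‖r‖ * ‖c n‖ := by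
          have h₁ := norm_sub_le (-p * c (n + 2) - q * c (n + 1)) (r * c n)
          have h₂ := norm_sub_le (-p * c (n + 2)) (q * c (n + 1))
          simp only [norm_mul, norm_neg] at h₁ h₂
          simp only [c, invCubicCoeff]
          linarith
      _ ≤ ‖p‖ * M ^ (n + 2) + ‖q‖ * M ^ (n + 1) + ‖r‖ * M ^ n := by gcongr
      _ ≤ (‖p‖ + ‖q‖ + ‖r‖) * M ^ (n + 2) := by
          rw [add_mul, add_mul]
          gcongr <;> first | exact hM | omega
      _ ≤ M ^ (n + 3) := by
          rw [pow_succ _ (n + 2), mul_comm]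
          gcongr
          simp only [M]; linarith

theorem hasSum_invCubicCoeff_mul_pow [CompleteSpace 𝕜] {x : 𝕜}
    (hx : ‖x‖ < (1 + ‖p‖ + ‖q‖ + ‖r‖)⁻¹) :
    HasSum (fun n => invCubicCoeff p q r n * x ^ n) (1 + p * x + q * x ^ 2 + r * x ^ 3)⁻¹ := by
  set c := invCubicCoeff p q r
  have hMx : (1 + ‖p‖ + ‖q‖ + ‖r‖) * ‖x‖ < 1 :=
    (lt_inv_mul_iff₀ (by positivity)).mp (by rwa [mul_one])
  have hsum : Summable fun n => c n * x ^ n :=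
    .of_norm_bounded (summable_geometric_of_lt_one (by positivity) hMx) fun n => by
      rw [norm_mul, norm_pow, mul_pow]
      gcongr
      exact norm_invCubicCoeff_le p q r n
  have hS := hsum.hasSum
  set S := ∑' n, c n * x ^ n
  have hrec : (fun n => c (n + 3) * x ^ (n + 3)) = fun n =>
      -p * x * (c (n + 2) * x ^ (n + 2)) - q * x ^ 2 * (c (n + 1) * x ^ (n + 1))
        - r * x ^ 3 * (c n * x ^ n) := by
    funext n
    simp only [c, invCubicCoeff]
    ring
  have h₃ := (hasSum_nat_add_iff' 3).mpr hS
  rw [hrec] at h₃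
  have key := h₃.unique <| ((((hasSum_nat_add_iff' 2).mpr hS).mul_left (-p * x)).sub
    (((hasSum_nat_add_iff' 1).mpr hS).mul_left (q * x ^ 2))).sub (hS.mul_left (r * x ^ 3))
  simp only [Finset.sum_range_succ, Finset.sum_range_zero, c, invCubicCoeff] at key
  have hmul : (1 + p * x + q * x ^ 2 + r * x ^ 3) * S = 1 := by linear_combination key
  rwa [inv_eq_of_mul_eq_one_right hmul]

theorem hasFPowerSeriesOnBall_inv_cubic [CompleteSpace 𝕜] :
    HasFPowerSeriesOnBall (fun x => (1 + p * x + q * x ^ 2 + r * x ^ 3)⁻¹)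
      (FormalMultilinearSeries.ofScalars 𝕜 (invCubicCoeff p q r)) 0
      (ENNReal.ofReal (1 + ‖p‖ + ‖q‖ + ‖r‖)⁻¹) where
  r_le := by
    refine FormalMultilinearSeries.le_radius_of_bound _ 1 fun n => ?_
    rw [FormalMultilinearSeries.ofScalars_norm, Real.coe_toNNReal _ (by positivity), inv_pow,
      ← div_eq_mul_inv, div_le_one (by positivity)]
    exact norm_invCubicCoeff_le p q r n
  r_pos := by simp only [ENNReal.ofReal_pos]; positivity
  hasSum {y} hy := by
    rw [Metric.mem_eball, edist_lt_ofReal, dist_zero_right] at hy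
    simp only [FormalMultilinearSeries.ofScalars_apply_eq, smul_eq_mul, zero_add]
    exact hasSum_invCubicCoeff_mul_pow p q r hy

theorem iteratedDeriv_inv_cubic_zero [CompleteSpace 𝕜] (k : ℕ) :
    iteratedDeriv k (fun x => (1 + p * x + q * x ^ 2 + r * x ^ 3)⁻¹) 0 =
      k.factorial * invCubicCoeff p q r k := by
  rw [iteratedDeriv_eq_iteratedFDeriv, ← (hasFPowerSeriesOnBall_inv_cubic p q r).factorial_smul,
    FormalMultilinearSeries.ofScalars_apply_eq]
  simp

end InvCubic

section Dmat

variable (a b : ℝ)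

theorem Dmat_submatrix_succ_succ (n : ℕ) :
    (Dmat (n + 1) a b).submatrix Fin.succ Fin.succ = Dmat n a b := by
  ext i j
  simp [Dmat]

theorem det_Dmat_add_three (n : ℕ) :
    (Dmat (n + 3) a b).det =
      -a * (Dmat (n + 2) a b).det - a * b * (Dmat (n + 1) a b).det - b ^ 3 * (Dmat n a b).det := by
  set A := Dmat (n + 3) a b
  have hA₂ : A.submatrix Fin.succ Fin.succ = Dmat (n + 2) a b := Dmat_submatrix_succ_succ a b _
  have hA₁ : (A.submatrix Fin.succ Fin.succ).submatrix Fin.succ Fin.succ = Dmat (n + 1) a b := by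
    rw [hA₂, Dmat_submatrix_succ_succ]
  have hA₀ : ((A.submatrix Fin.succ Fin.succ).submatrix Fin.succ Fin.succ).submatrix
      Fin.succ Fin.succ = Dmat n a b := by
    rw [hA₁, Dmat_submatrix_succ_succ]
  have minor₁ :
      (A.submatrix (Fin.succ 0).succAbove Fin.succ).det = b * (Dmat (n + 1) a b).det := by
    rw [Matrix.det_succ_of_row_zero_tail_eq_zero _ (fun j => by simp [A, Dmat]), ← hA₁]
    congr 1
  have minor₂ : (A.submatrix (Fin.succ (Fin.succ 0)).succAbove Fin.succ).det =
      b ^ 2 * (Dmat n a b).det := by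
    rw [Matrix.det_succ_of_row_zero_tail_eq_zero _ (fun j => by
        simp only [Matrix.submatrix_apply, Fin.succ_succAbove_zero]
        simp [A, Dmat]),
      Matrix.det_succ_of_row_zero_tail_eq_zero _ (fun j => by
        simp only [Matrix.submatrix_apply, Fin.succ_succAbove_zero, Fin.succ_succAbove_succ]
        simp [A, Dmat]), ← hA₀, ← mul_assoc, sq]
    congr 2
  have e₀ : A 0 0 = -a := by simp [A, Dmat]
  have e₁ : A (Fin.succ 0) 0 = a := by simp [A, Dmat]
  have e₂ : A (Fin.succ (Fin.succ 0)) 0 = -b := by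
    simp only [A, Dmat, Matrix.of_apply, Fin.val_succ, Fin.val_zero]; norm_num
  have e₃ (i : Fin n) : A i.succ.succ.succ 0 = 0 := by simp [A, Dmat]
  rw [Matrix.det_succ_column_zero]
  simp only [Fin.sum_univ_succ, Fin.succAbove_zero, hA₂, minor₁, minor₂, e₀, e₁, e₂, e₃,
    Fin.val_succ, Fin.val_zero, mul_zero, zero_mul, Finset.sum_const_zero]
  ring

theorem det_Dmat_eq_invCubicCoeff (n : ℕ) :
    (Dmat n a b).det = invCubicCoeff a (a * b) (b ^ 3) n := by
  induction n using invCubicCoeff.induct with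
  | case1 => simp [invCubicCoeff]
  | case2 => simp [Dmat, invCubicCoeff]
  | case3 =>
    rw [Matrix.det_fin_two]
    simp [Dmat, invCubicCoeff]
    ring
  | case4 n ih₀ ih₁ ih₂ => rw [det_Dmat_add_three, ih₀, ih₁, ih₂, invCubicCoeff]

end Dmat

theorem stmt3_general (a : ℝ) (k : ℕ) :
    (Dmat k a 1).det =
      (1 / (k.factorial : ℝ)) *
        iteratedDeriv k (fun x : ℝ => (1 + a * x + a * x ^ 2 + x ^ 3)⁻¹) 0 := by
  have hderiv := iteratedDeriv_inv_cubic_zero a a 1 k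
  simp only [one_mul] at hderiv
  rw [hderiv, det_Dmat_eq_invCubicCoeff, mul_one, one_pow, ← mul_assoc, one_div,
    inv_mul_cancel₀ (by positivity), one_mul]

theorem stmt3 (a : ℝ) (ha : 0 < a) (k : ℕ) :
    (Dmat k a 1).det =
      (1 / (k.factorial : ℝ)) *
        iteratedDeriv k (fun x : ℝ => (1 + a * x + a * x ^ 2 + x ^ 3)⁻¹) 0 :=
  stmt3_general a k
end

section
/- For every integer n ≥ 1 and every k with 1 ≤ k ≤ n+1, the determinant of the n×n matrix E_n^k(3,1), obtained by deleting the k-th row of E_n(3,1), equals (-1)^{k-1}·k·(n+2)·(n−k+2)/2; in particular det E_n^k(3,1) ≠ 0 for all 1 ≤ k ≤ n+1, i.e. all order-n minors of E_n(3,1) are nonzero. -/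
/-- The `(n+1) × n` matrix `E_n(a,b)` (rows indexed by `Fin (n+1)`, columns by `Fin n`). -/
def Emat (n : ℕ) (a b : ℝ) : Matrix (Fin (n + 1)) (Fin n) ℝ :=
  Matrix.of fun i j =>
    if (i : ℕ) = (j : ℕ) then -a
    else if (i : ℕ) + 1 = (j : ℕ) then b
    else if (i : ℕ) = (j : ℕ) + 1 then a
    else if (i : ℕ) = (j : ℕ) + 2 then -b
    else 0

/-- `E_n^k(a,b)`: the `n × n` matrix obtained from `E_n(a,b)` by deleting the
`k`-th row (rows of `E_n(a,b)` being counted `1,…,n+1`). -/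
def Ek (n : ℕ) (a b : ℝ) (k : ℕ) : Matrix (Fin n) (Fin n) ℝ :=
  Matrix.of fun i j =>
    Emat n a b (if (i : ℕ) + 1 < k then i.castSucc else i.succ) j

/-!
Write `s k` for `(-1)^(k+1) det E_n^k(a,b)` (`1 ≤ k ≤ n+1`), extended by `s 0 = s (n+2) = 0`.
By Laplace expansion the vector `s` is orthogonal to every column of `E_n(a,b)`, so for
`(a,b) = (3,1)` its third differences vanish and `s` is the quadratic `λ k (n+2-k)`.
The constant `λ = s 1 / (n+1)` comes from the first-column expansion
`s_{n+1} 1 = 3 s_n 1 - s_n 2`, which gives `s_n 1 = (n+1)(n+2)/2` by induction on `n`.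
-/

open Matrix Finset

/-- Expand along its first column the matrix `[A_j | A]`, which has two equal columns. -/
theorem Matrix.sum_neg_one_pow_mul_det_submatrix_succAbove_eq_zero {R : Type*} [CommRing R]
    {n : ℕ} (A : Matrix (Fin (n + 1)) (Fin n) R) (j : Fin n) :
    ∑ i : Fin (n + 1), (-1) ^ (i : ℕ) * A i j * (A.submatrix i.succAbove id).det = 0 := by
  let B : Matrix (Fin (n + 1)) (Fin (n + 1)) R := of fun i => Fin.cons (A i j) (A i)
  have hB : B.det = 0 := det_zero_of_column_eq (Fin.succ_ne_zero j).symm fun i => by simp [B]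
  have hminor (i : Fin (n + 1)) :
      B.submatrix i.succAbove Fin.succ = A.submatrix i.succAbove id := by
    ext; simp [B]
  simpa [det_succ_column_zero, hminor, B] using hB

theorem mul_eq_of_third_difference_eq_zero {y : ℕ → ℝ} {n : ℕ} (h0 : y 0 = 0)
    (hn : y (n + 2) = 0) (hrec : ∀ j < n, y j - 3 * y (j + 1) + 3 * y (j + 2) - y (j + 3) = 0)
    {m : ℕ} (hm : m ≤ n + 2) : (n + 1) * y m = m * (n + 2 - m) * y 1 := by
  have quadratic (m : ℕ) (hm : m ≤ n + 2) :
      y m = m * y 1 + m * (m - 1) / 2 * (y 2 - 2 * y 1) := by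
    induction m using Nat.strong_induction_on with
    | _ m ih =>
      match m with
      | 0 => simp [h0]
      | 1 => simp
      | 2 => norm_num
      | m + 3 =>
        have e0 := ih m (by omega) (by omega)
        have e1 := ih (m + 1) (by omega) (by omega)
        have e2 := ih (m + 2) (by omega) (by omega)
        push_cast at e1 e2 ⊢
        linear_combination -hrec m (by omega) + e0 - 3 * e1 + 3 * e2
  have hslope : (n + 1) * (y 2 - 2 * y 1) = -2 * y 1 := by
    have h := quadratic (n + 2) le_rfl
    rw [hn] at h
    push_cast at h
    apply mul_left_cancel₀ (show (n : ℝ) + 2 ≠ 0 by positivity)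
    linear_combination -2 * h
  rw [quadratic m hm]
  linear_combination (m * (m - 1) / 2 : ℝ) * hslope

/-- The paper's rows are counted from `1`; the value `0` at `k = 0` and `k = n + 2` stands for
the missing rows above and below `E_n(a,b)`. -/
noncomputable def signedMinor (n : ℕ) (a b : ℝ) (k : ℕ) : ℝ :=
  if 1 ≤ k ∧ k ≤ n + 1 then (-1) ^ (k + 1) * (Ek n a b k).det else 0

section

variable {n : ℕ} {a b : ℝ}

theorem Ek_add_one (i : Fin (n + 1)) :
    Ek n a b (i + 1) = (Emat n a b).submatrix i.succAbove id := by
  ext r j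
  simp [Ek, Fin.succAbove, Fin.lt_def]

theorem Emat_succ_succ (i : Fin (n + 1)) (j : Fin n) :
    Emat (n + 1) a b i.succ j.succ = Emat n a b i j := by
  simp [Emat]

theorem Emat_submatrix_succ_succ {m : ℕ} (r : Fin m → Fin (n + 1)) :
    (Emat (n + 1) a b).submatrix (Fin.succ ∘ r) Fin.succ = (Emat n a b).submatrix r id := by
  ext i j
  exact Emat_succ_succ (r i) j

@[simp] theorem signedMinor_zero : signedMinor n a b 0 = 0 := by
  simp [signedMinor]

theorem signedMinor_of_lt {k : ℕ} (hk : n + 1 < k) : signedMinor n a b k = 0 := by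
  simp [signedMinor]; omega

theorem signedMinor_add_one (i : Fin (n + 1)) :
    signedMinor n a b (i + 1) = (-1) ^ (i : ℕ) * ((Emat n a b).submatrix i.succAbove id).det := by
  rw [signedMinor, if_pos (by omega), Ek_add_one]
  ring

theorem signedMinor_one_eq_det :
    signedMinor n a b 1 = ((Emat n a b).submatrix Fin.succ id).det := by
  simpa using signedMinor_add_one (n := n) (a := a) (b := b) 0

theorem det_Ek_eq_signedMinor {k : ℕ} (hk1 : 1 ≤ k) (hk2 : k ≤ n + 1) :
    (Ek n a b k).det = (-1) ^ (k - 1) * signedMinor n a b k := by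
  rw [signedMinor, if_pos ⟨hk1, hk2⟩, ← mul_assoc, ← pow_add,
    Even.neg_one_pow ⟨k, by omega⟩, one_mul]

theorem signedMinor_recurrence {j : ℕ} (hj : j < n) :
    b * signedMinor n a b j - a * signedMinor n a b (j + 1) + a * signedMinor n a b (j + 2)
      - b * signedMinor n a b (j + 3) = 0 := by
  set s := signedMinor n a b
  let e (m : ℕ) : ℝ :=
    if m = j then -a else if m + 1 = j then b
    else if m = j + 1 then a else if m = j + 2 then -b else 0
  let g (m : ℕ) : ℝ := s m * e (m - 1)
  have hg (m : ℕ) : g m = (if m = j then b * s m else 0) + (if m = j + 1 then -a * s m else 0)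
      + (if m = j + 2 then a * s m else 0) + (if m = j + 3 then -b * s m else 0) := by
    rcases m with _ | m
    · simp [g, s]
    · simp only [g, e, Nat.add_sub_cancel]
      split_ifs <;> first | omega | ring
  have hsum := Matrix.sum_neg_one_pow_mul_det_submatrix_succAbove_eq_zero (Emat n a b) ⟨j, hj⟩
  have he (i : Fin (n + 1)) : Emat n a b i ⟨j, hj⟩ = e i := rfl
  simp only [he, mul_right_comm _ (e _), ← signedMinor_add_one] at hsum
  -- reindex by the paper's row number `m`, padded with the zero terms `m = 0` and `m = n + 2`
  have hrange : ∑ m ∈ range (n + 3), g m = 0 := by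
    rw [sum_range_succ, sum_range_succ', ← hsum,
      Fin.sum_univ_eq_sum_range (fun m => s (m + 1) * e m)]
    simp [g, s, signedMinor_of_lt]
  simp only [hg, sum_add_distrib, sum_ite_eq', mem_range, show j + 3 < n + 3 by omega,
    show j + 2 < n + 3 by omega, show j + 1 < n + 3 by omega, show j < n + 3 by omega,
    if_true] at hrange
  linarith

theorem signedMinor_succ_one :
    signedMinor (n + 1) a b 1 = a * signedMinor n a b 1 - b * signedMinor n a b 2 := by
  rw [signedMinor_one_eq_det]
  rcases n with _ | n
  · simp [signedMinor, Emat, Matrix.det_unique]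
  · have hzero (i : Fin n) : Emat (n + 2) a b i.succ.succ.succ 0 = 0 := by simp [Emat]
    have h00 : Emat (n + 2) a b 1 0 = a := by simp [Emat]
    have h10 : Emat (n + 2) a b (Fin.succ 1) 0 = -b := by
      simp [Emat, Nat.mod_eq_of_lt (show 2 < n + 2 + 1 by omega)]
    have htwo := signedMinor_add_one (n := n + 1) (a := a) (b := b) 1
    simp only [Fin.val_one, pow_one, neg_one_mul] at htwo
    rw [det_succ_column_zero, Fin.sum_univ_succ, Fin.sum_univ_succ]
    simp only [submatrix_apply, id, submatrix_submatrix, Fin.succAbove_zero, hzero, h00, h10,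
      Emat_submatrix_succ_succ, signedMinor_one_eq_det, htwo, Function.id_comp,
      Fin.succ_zero_eq_one]
    simp only [Fin.val_zero, Fin.val_one, mul_zero, zero_mul, sum_const_zero]
    ring

end

theorem signedMinor_three_one_mul (n : ℕ) {k : ℕ} (hk : k ≤ n + 2) :
    (n + 1) * signedMinor n 3 1 k = k * (n + 2 - k) * signedMinor n 3 1 1 :=
  mul_eq_of_third_difference_eq_zero signedMinor_zero (signedMinor_of_lt (by omega))
    (fun j hj => by simpa using signedMinor_recurrence (a := 3) (b := 1) hj) hk

theorem signedMinor_three_one_one (n : ℕ) : signedMinor n 3 1 1 = (n + 1) * (n + 2) / 2 := by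
  induction n with
  | zero => norm_num [signedMinor_one_eq_det]
  | succ n ih =>
    have htwo := signedMinor_three_one_mul n (k := 2) (by omega)
    rw [ih] at htwo
    rw [signedMinor_succ_one, ih]
    push_cast at htwo ⊢
    apply mul_left_cancel₀ (show (n : ℝ) + 1 ≠ 0 by positivity)
    linear_combination -htwo

theorem signedMinor_three_one (n : ℕ) {k : ℕ} (hk : k ≤ n + 2) :
    signedMinor n 3 1 k = k * (n + 2) * (n + 2 - k) / 2 := by
  have h := signedMinor_three_one_mul n hk
  rw [signedMinor_three_one_one] at h
  apply mul_left_cancel₀ (show (n : ℝ) + 1 ≠ 0 by positivity)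
  linear_combination h

theorem stmt6_general (n : ℕ) (k : ℕ) (hk1 : 1 ≤ k) (hk2 : k ≤ n + 1) :
    (Ek n 3 1 k).det =
        (-1 : ℝ) ^ (k - 1) * (k : ℝ) * ((n : ℝ) + 2) * ((n : ℝ) - (k : ℝ) + 2) / 2 ∧
      (Ek n 3 1 k).det ≠ 0 := by
  have hdet : (Ek n 3 1 k).det =
      (-1 : ℝ) ^ (k - 1) * (k : ℝ) * ((n : ℝ) + 2) * ((n : ℝ) - (k : ℝ) + 2) / 2 := by
    rw [det_Ek_eq_signedMinor hk1 hk2, signedMinor_three_one n (by omega)]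
    ring
  refine ⟨hdet, hdet ▸ ?_⟩
  have hk0 : (k : ℝ) ≠ 0 := Nat.cast_ne_zero.mpr (by omega)
  have hkn : (k : ℝ) < n + 2 := by exact_mod_cast Nat.lt_succ_of_le hk2
  exact div_ne_zero (mul_ne_zero (mul_ne_zero (mul_ne_zero (pow_ne_zero _ (by norm_num)) hk0)
    (by positivity)) (by linarith)) two_ne_zero

theorem stmt6 (n : ℕ) (hn : 1 ≤ n) (k : ℕ) (hk1 : 1 ≤ k) (hk2 : k ≤ n + 1) :
    (Ek n 3 1 k).det =
        (-1 : ℝ) ^ (k - 1) * (k : ℝ) * ((n : ℝ) + 2) * ((n : ℝ) - (k : ℝ) + 2) / 2 ∧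
      (Ek n 3 1 k).det ≠ 0 :=
  stmt6_general n k hk1 hk2
end

section
/- Let k ≥ 2 be an integer, let α > 5 be a real number, and let a(i), b(i), c(i), d(i) ∈ ℂ for i = 1,…,k−1 satisfy |a(i)| = |d(i)| = 1 and |b(i)| = |c(i)| = α. Suppose x_1,…,x_k ∈ ℂ with x_1 ≠ 0 satisfy: c(1)x_1 + d(1)x_2 = 0; b(2)x_1 + c(2)x_2 + d(2)x_3 = 0 (if k ≥ 3); and a(i)x_{i−2} + b(i)x_{i−1} + c(i)x_i + d(i)x_{i+1} = 0 for every 3 ≤ i ≤ k−1. Then |x_{l+1}| ≥ (α − 2)·|x_l| for every l = 1,…,k−1. -/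
/-!
Taking norms in the `i`-th equation, `c i * x i = -(a i * x (i-2) + b i * x (i-1) + d i * x (i+1))`
gives `α‖x i‖ ≤ ‖x (i-2)‖ + α‖x (i-1)‖ + ‖x (i+1)‖`, with the missing terms of the first two
equations read as `0`. If the two previous ratios `‖x (j+1)‖ / ‖x j‖` are at least `α - 2`, the
terms `‖x (i-2)‖ + α‖x (i-1)‖` are at most `2‖x i‖` once `(α - 3)² ≥ 2`, so the next ratio is at
least `α - 2` as well, and strong induction on `l` finishes.
-/

theorem le_norm_of_mul_add_mul_add_mul_add_mul_eq_zero {𝕜 : Type*} [NormedField 𝕜]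
    {a b c d u v w z : 𝕜} {α : ℝ} (ha : ‖a‖ ≤ 1) (hb : ‖b‖ ≤ α) (hc : ‖c‖ = α) (hd : ‖d‖ ≤ 1)
    (h : a * u + b * v + c * w + d * z = 0) :
    α * ‖w‖ - α * ‖v‖ - ‖u‖ ≤ ‖z‖ := by
  have hcw : c * w = -(a * u + b * v + d * z) := by linear_combination h
  have key : α * ‖w‖ ≤ ‖u‖ + α * ‖v‖ + ‖z‖ :=
    calc α * ‖w‖ = ‖a * u + b * v + d * z‖ := by rw [← hc, ← norm_mul, hcw, norm_neg]
      _ ≤ ‖a * u‖ + ‖b * v‖ + ‖d * z‖ := norm_add₃_le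
      _ ≤ ‖u‖ + α * ‖v‖ + ‖z‖ := by
        gcongr
        · exact (norm_mul_le a u).trans (mul_le_of_le_one_left (norm_nonneg u) ha)
        · exact (norm_mul_le b v).trans (by gcongr)
        · exact (norm_mul_le d z).trans (mul_le_of_le_one_left (norm_nonneg z) hd)
  linarith

theorem sub_two_mul_le_of_sub_two_mul_le {α X₀ X₁ X₂ X₃ : ℝ} (hα : 3 + √2 ≤ α) (h₀ : 0 ≤ X₀)
    (h₀₁ : (α - 2) * X₀ ≤ X₁) (h₁₂ : (α - 2) * X₁ ≤ X₂) (h : α * X₂ - α * X₁ - X₀ ≤ X₃) :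
    (α - 2) * X₂ ≤ X₃ := by
  have hsq : 2 ≤ (α - 3) ^ 2 := by
    nlinarith [Real.sq_sqrt (zero_le_two : (0 : ℝ) ≤ 2), Real.sqrt_nonneg 2]
  have ht : 1 < α - 2 := by nlinarith [Real.sqrt_nonneg 2]
  have h₁ : 0 ≤ X₁ := by nlinarith
  -- multiplied by `α - 2`, the claim `α X₁ + X₀ ≤ 2 X₂` follows from `(α - 3)² ≥ 2`
  have hsum : α * X₁ + X₀ ≤ 2 * X₂ := by
    refine le_of_mul_le_mul_left ?_ (by linarith : (0 : ℝ) < α - 2)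
    nlinarith [mul_le_mul_of_nonneg_right hsq h₁]
  linarith

theorem stmt7_general (k : ℕ) (α : ℝ) (hα : 5 < α)
    (a b c d x : ℕ → ℂ)
    (habs : ∀ i, 1 ≤ i → i ≤ k - 1 →
      ‖a i‖ = 1 ∧ ‖d i‖ = 1 ∧
        ‖b i‖ = α ∧ ‖c i‖ = α)
    (heq1 : c 1 * x 1 + d 1 * x 2 = 0)
    (heq2 : 3 ≤ k → b 2 * x 1 + c 2 * x 2 + d 2 * x 3 = 0)
    (heqi : ∀ i, 3 ≤ i → i ≤ k - 1 →
      a i * x (i - 2) + b i * x (i - 1) + c i * x i + d i * x (i + 1) = 0) :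
    ∀ l, 1 ≤ l → l ≤ k - 1 →
      (α - 2) * ‖x l‖ ≤ ‖x (l + 1)‖ := by
  have hα' : 3 + √2 ≤ α := by
    nlinarith [Real.sq_sqrt (zero_le_two : (0 : ℝ) ≤ 2), Real.sqrt_nonneg 2]
  intro l
  induction l using Nat.strong_induction_on with
  | _ l ih =>
    intro hl hlk
    obtain ⟨ha, hd, hb, hc⟩ := habs l hl hlk
    match l, hl with
    | 1, _ =>
      have hrec := le_norm_of_mul_add_mul_add_mul_add_mul_eq_zero (u := 0) (v := 0)
        (norm_zero.trans_le zero_le_one) (norm_zero.trans_le (by linarith)) hc hd.le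
        (by simpa using heq1)
      exact sub_two_mul_le_of_sub_two_mul_le hα' (norm_nonneg 0) (by simp) (by simp) hrec
    | 2, _ =>
      have hrec := le_norm_of_mul_add_mul_add_mul_add_mul_eq_zero (u := 0)
        (norm_zero.trans_le zero_le_one) hb.le hc hd.le (by simpa using heq2 (by omega))
      exact sub_two_mul_le_of_sub_two_mul_le hα' (norm_nonneg 0) (by simp)
        (ih 1 (by omega) le_rfl (by omega)) hrec
    | m + 3, _ =>
      have hrec := le_norm_of_mul_add_mul_add_mul_add_mul_eq_zero ha.le hb.le hc hd.le
        (heqi (m + 3) (by omega) hlk)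
      exact sub_two_mul_le_of_sub_two_mul_le hα' (norm_nonneg _)
        (ih (m + 1) (by omega) (by omega) (by omega))
        (ih (m + 2) (by omega) (by omega) (by omega)) hrec

theorem stmt7 (k : ℕ) (hk : 2 ≤ k) (α : ℝ) (hα : 5 < α)
    (a b c d x : ℕ → ℂ)
    (habs : ∀ i, 1 ≤ i → i ≤ k - 1 →
      ‖a i‖ = 1 ∧ ‖d i‖ = 1 ∧
        ‖b i‖ = α ∧ ‖c i‖ = α)
    (hx1 : x 1 ≠ 0)
    (heq1 : c 1 * x 1 + d 1 * x 2 = 0)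
    (heq2 : 3 ≤ k → b 2 * x 1 + c 2 * x 2 + d 2 * x 3 = 0)
    (heqi : ∀ i, 3 ≤ i → i ≤ k - 1 →
      a i * x (i - 2) + b i * x (i - 1) + c i * x i + d i * x (i + 1) = 0) :
    ∀ l, 1 ≤ l → l ≤ k - 1 →
      (α - 2) * ‖x l‖ ≤ ‖x (l + 1)‖ :=
  stmt7_general k α hα a b c d x habs heq1 heq2 heqi
end

section
/- For every real number a with |a| > 5, every integer n ≥ 1, and every k with 1 ≤ k ≤ n+1, the n×n matrix Ẽ_n^k(a,1), obtained by deleting the k-th row of Ẽ_n(a,1), is invertible; that is, all order-n minors of Ẽ_n(a,1) are nonzero. -/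
/-- The `(n+1) × n` matrix `Ẽ_n(a,1)`. -/
def Etmat (n : ℕ) (a : ℝ) : Matrix (Fin (n + 1)) (Fin n) ℝ :=
  Matrix.of fun i j =>
    if (i : ℕ) = (j : ℕ) then a
    else if (i : ℕ) + 1 = (j : ℕ) then 1
    else if (i : ℕ) = (j : ℕ) + 1 then a
    else if (i : ℕ) = (j : ℕ) + 2 then 1
    else 0

/-- `Ẽ_n^k(a,1)`: the `n × n` matrix obtained from `Ẽ_n(a,1)` by deleting the
`k`-th row (rows of `Ẽ_n(a,1)` being counted `1,…,n+1`). -/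
def Etk (n : ℕ) (a : ℝ) (k : ℕ) : Matrix (Fin n) (Fin n) ℝ :=
  Matrix.of fun i j =>
    Etmat n a (if (i : ℕ) + 1 < k then i.castSucc else i.succ) j

/-!
Scale column `j` (counted from `0`) by `2 ^ (-|j - (k - 1)|)`. Every row of `Ẽ_n^k(a,1)` is a row
of `Ẽ_n(a,1)`, with entries `1, a, a, 1` in four consecutive columns, and its diagonal entry is the
`a` nearer to the peak column `k - 1`. Hence the weighted off-diagonal entries of a row add up to at
most `(2 + |a| / 2 + 1 / 4)` times the weighted diagonal entry, so the scaled matrix is strictly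
diagonally dominant once `|a| > 9 / 2`, and the Levy–Desplanques theorem applies.
-/

open Finset

theorem Matrix.det_ne_zero_of_weighted_sum_row_lt_diag {K n : Type*} [NormedField K] [Fintype n]
    [DecidableEq n] (A : Matrix n n K) (d : n → K)
    (h : ∀ i, ∑ j ∈ univ.erase i, ‖A i j‖ * ‖d j‖ < ‖A i i‖ * ‖d i‖) :
    A.det ≠ 0 := by
  have hAd : (A * diagonal d).det ≠ 0 :=
    det_ne_zero_of_sum_row_lt_diag fun i => by
      simpa only [mul_diagonal, norm_mul] using h i
  rw [det_mul] at hAd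
  exact left_ne_zero_of_mul hAd

theorem Finset.sum_ite_eq_le_of_injOn {ι α : Type*} [DecidableEq α] (s : Finset ι) {f : ι → α}
    (hf : Set.InjOn f s) (b : α) {g : α → ℝ} (hg : 0 ≤ g b) :
    ∑ i ∈ s, (if f i = b then g (f i) else 0) ≤ g b := by
  rw [← sum_image (f := fun x => if x = b then g x else 0) hf, sum_ite_eq']
  split_ifs
  exacts [le_rfl, hg]

lemma sum_ite_val_eq_le {n : ℕ} (m : ℤ) {g : ℤ → ℝ} (hg : 0 ≤ g m) :
    ∑ j : Fin n, (if ((j : ℕ) : ℤ) = m then g j else 0) ≤ g m :=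
  Finset.sum_ite_eq_le_of_injOn _ (fun _ _ _ _ h => Fin.ext (by exact_mod_cast h)) m hg

lemma abs_Etmat_mul_le {n : ℕ} (a : ℝ) (r : Fin (n + 1)) (j : Fin n) (w : ℤ → ℝ) :
    |Etmat n a r j| * w j ≤
      (if (j : ℤ) = r - 2 then w j else 0) + (if (j : ℤ) = r - 1 then |a| * w j else 0) +
      (if (j : ℤ) = r then |a| * w j else 0) + (if (j : ℤ) = r + 1 then w j else 0) := by
  simp only [Etmat, Matrix.of_apply]
  split_ifs <;> first | omega | simp

lemma sum_abs_Etmat_mul_le {n : ℕ} (a : ℝ) (r : Fin (n + 1)) {w : ℤ → ℝ}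
    (hw : ∀ j, 0 ≤ w j) :
    ∑ j : Fin n, |Etmat n a r j| * w j ≤
      w (r - 2) + |a| * w (r - 1) + |a| * w r + w (r + 1) := by
  refine (sum_le_sum fun j _ => abs_Etmat_mul_le a r j w).trans ?_
  simp only [sum_add_distrib]
  gcongr
  · exact sum_ite_val_eq_le _ (hw _)
  · exact sum_ite_val_eq_le (g := fun j => |a| * w j) _ (mul_nonneg (abs_nonneg a) (hw _))
  · exact sum_ite_val_eq_le (g := fun j => |a| * w j) _ (mul_nonneg (abs_nonneg a) (hw _))
  · exact sum_ite_val_eq_le _ (hw _)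

noncomputable def tentWeight (p j : ℤ) : ℝ := 2 ^ (-|j - p|)

lemma tentWeight_pos (p j : ℤ) : 0 < tentWeight p j := zpow_pos two_pos _

lemma tentWeight_sub_one {p j : ℤ} (h : j ≤ p) : tentWeight p (j - 1) = tentWeight p j / 2 := by
  rw [tentWeight, tentWeight, abs_of_nonpos (by omega), abs_of_nonpos (by omega),
    show -(-(j - 1 - p)) = -(-(j - p)) - 1 by ring, zpow_sub_one₀ two_ne_zero, div_eq_mul_inv]

lemma tentWeight_add_one {p j : ℤ} (h : p ≤ j) : tentWeight p (j + 1) = tentWeight p j / 2 := by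
  rw [tentWeight, tentWeight, abs_of_nonneg (by omega), abs_of_nonneg (by omega),
    show -(j + 1 - p) = -(j - p) - 1 by ring, zpow_sub_one₀ two_ne_zero, div_eq_mul_inv]

lemma tentWeight_sub_one_le (p j : ℤ) : tentWeight p (j - 1) ≤ 2 * tentWeight p j := by
  rw [tentWeight, tentWeight, ← zpow_one_add₀ two_ne_zero]
  refine zpow_le_zpow_right₀ one_le_two ?_
  cases abs_cases (j - 1 - p) <;> cases abs_cases (j - p) <;> omega

section

variable {n : ℕ} {a : ℝ} {p : ℤ}

lemma Etmat_castSucc_self (a : ℝ) (i : Fin n) : Etmat n a i.castSucc i = a := by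
  simp [Etmat]

lemma Etmat_succ_self (a : ℝ) (i : Fin n) : Etmat n a i.succ i = a := by
  have : (i : ℕ) + 1 + 1 ≠ i := by omega
  simp [Etmat, this]

lemma sum_abs_Etmat_castSucc_mul_tentWeight_lt (ha : 9 / 2 < |a|) {i : Fin n}
    (hip : (i : ℤ) + 1 ≤ p) :
    ∑ j : Fin n, |Etmat n a i.castSucc j| * tentWeight p j < 2 * (|a| * tentWeight p i) := by
  have hwi := tentWeight_pos p i
  have hnext : tentWeight p i = tentWeight p (i + 1) / 2 := by
    simpa using tentWeight_sub_one (j := i + 1) hip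
  have hprev : tentWeight p (i - 1) = tentWeight p i / 2 := tentWeight_sub_one (by omega)
  have hprev2 : tentWeight p (i - 2) = tentWeight p i / 4 := by
    rw [show (i : ℤ) - 2 = i - 1 - 1 by ring, tentWeight_sub_one (by omega), hprev]
    ring
  have hrow := sum_abs_Etmat_mul_le a i.castSucc fun j => (tentWeight_pos p j).le
  simp only [Fin.val_castSucc] at hrow
  nlinarith

lemma sum_abs_Etmat_succ_mul_tentWeight_lt (ha : 9 / 2 < |a|) {i : Fin n} (hpi : p ≤ i) :
    ∑ j : Fin n, |Etmat n a i.succ j| * tentWeight p j < 2 * (|a| * tentWeight p i) := by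
  have hwi := tentWeight_pos p i
  have hnext : tentWeight p (i + 1) = tentWeight p i / 2 := tentWeight_add_one hpi
  have hnext2 : tentWeight p (i + 1 + 1) = tentWeight p i / 4 := by
    rw [tentWeight_add_one (by omega), hnext]
    ring
  have hprev : tentWeight p (i - 1) ≤ 2 * tentWeight p i := tentWeight_sub_one_le p i
  have hrow := sum_abs_Etmat_mul_le a i.succ fun j => (tentWeight_pos p j).le
  simp only [Fin.val_succ, Nat.cast_add, Nat.cast_one, add_sub_cancel_right,
    show (i : ℤ) + 1 - 2 = i - 1 by ring] at hrow
  nlinarith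

lemma Etk_row_of_lt (a : ℝ) {k : ℕ} {i : Fin n} (h : (i : ℕ) + 1 < k) :
    Etk n a k i = Etmat n a i.castSucc := by
  ext j
  simp [Etk, h]

lemma Etk_row_of_le (a : ℝ) {k : ℕ} {i : Fin n} (h : k ≤ (i : ℕ) + 1) :
    Etk n a k i = Etmat n a i.succ := by
  ext j
  simp [Etk, h.not_gt]

lemma Etk_weighted_sum_row_lt_diag (ha : 9 / 2 < |a|) (k : ℕ) (i : Fin n) :
    ∑ j ∈ univ.erase i, |Etk n a k i j| * tentWeight (k - 1) j <
      |Etk n a k i i| * tentWeight (k - 1) i := by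
  rw [← add_lt_add_iff_right (|Etk n a k i i| * tentWeight (k - 1) i),
    sum_erase_add _ _ (mem_univ i), ← two_mul]
  rcases lt_or_ge ((i : ℕ) + 1) k with hik | hki
  · rw [Etk_row_of_lt a hik, Etmat_castSucc_self]
    exact sum_abs_Etmat_castSucc_mul_tentWeight_lt ha (by omega)
  · rw [Etk_row_of_le a hki, Etmat_succ_self]
    exact sum_abs_Etmat_succ_mul_tentWeight_lt ha (by omega)

end

theorem stmt9_general (a : ℝ) (ha : 5 < |a|) (n : ℕ)
    (k : ℕ) :
    IsUnit (Etk n a k) ∧ (Etk n a k).det ≠ 0 := by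
  have hdet : (Etk n a k).det ≠ 0 :=
    (Etk n a k).det_ne_zero_of_weighted_sum_row_lt_diag (fun j => tentWeight (k - 1) j)
      fun i => by
        simpa only [Real.norm_eq_abs, abs_of_pos (tentWeight_pos _ _)] using
          Etk_weighted_sum_row_lt_diag (by linarith) k i
  exact ⟨(Matrix.isUnit_iff_isUnit_det _).mpr hdet.isUnit, hdet⟩

theorem stmt9 (a : ℝ) (ha : 5 < |a|) (n : ℕ) (hn : 1 ≤ n)
    (k : ℕ) (hk1 : 1 ≤ k) (hk2 : k ≤ n + 1) :
    IsUnit (Etk n a k) ∧ (Etk n a k).det ≠ 0 :=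
  stmt9_general a ha n k
end

section
/- For every real number a with |a| ≥ 2, every integer n ≥ 1, and all indices 1 ≤ i < j ≤ n+2, the n×n matrix G_n(a,1)^{i,j}, obtained by deleting the i-th and j-th rows of G_n(a,1), is invertible; that is, all order-n minors of G_n(a,1) are nonzero. -/
/-! Extended by zero to `ℤ`, a kernel vector `x` of `G_n(a,1)^{i,j}` satisfies
`x t + a * x (t - 1) + x (t - 2) = 0` at every row `t` except the deleted rows
`p = i - 1 < q = j - 1`. Running the recurrence up from the zero tail on the left and down from
the zero tail on the right gives `x = 0` outside `[p, q - 2]`. Inside, `x (p - 1) = 0` and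
`2 ≤ |a|` make the increments `|x t| - |x (t - 1)|` at least `|x p|`, so
`|x p| ≤ |x (q - 1)| = 0`; with the two zeros `x (p - 1)` and `x p` the recurrence then kills
the middle block too. -/

/-- The `(n+2) × n` matrix `G_n(a,1)`: column `j` (for `j = 1,…,n`, here 0-indexed)
has entries `1, a, 1` in rows `j, j+1, j+2` (1-indexed) and `0` elsewhere. -/
def Gmat (n : ℕ) (a : ℝ) : Matrix (Fin (n + 2)) (Fin n) ℝ :=
  Matrix.of fun i j =>
    if (i : ℕ) = (j : ℕ) then 1
    else if (i : ℕ) = (j : ℕ) + 1 then a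
    else if (i : ℕ) = (j : ℕ) + 2 then 1
    else 0

/-- `G_n(a,1)^{i,j}`: the `n × n` matrix obtained from `G_n(a,1)` by deleting its
`i`-th and `j`-th rows (rows counted `1,…,n+2`, with `i < j`). -/
def Gij (n : ℕ) (a : ℝ) (i j : ℕ) : Matrix (Fin n) (Fin n) ℝ :=
  Matrix.of fun r c =>
    Gmat n a
      (if (r : ℕ) + 1 < i then r.castSucc.castSucc
       else if (r : ℕ) + 2 < j then r.succ.castSucc
       else r.succ.succ) c

namespace PalindromicRecurrence

section CommRing

variable {R : Type*} [CommRing R] {a : R} {x : ℤ → R} {m M : ℤ}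

theorem eq_zero_of_two_zeros_left (h₂ : x (m - 2) = 0) (h₁ : x (m - 1) = 0)
    (hrec : ∀ t, m ≤ t → t ≤ M → x t + a * x (t - 1) + x (t - 2) = 0) :
    ∀ t, m - 2 ≤ t → t ≤ M → x t = 0 := by
  have key : ∀ t, m - 1 ≤ t → t ≤ M → x (t - 1) = 0 ∧ x t = 0 := by
    intro t ht
    induction t, ht using Int.leInduction with
    | base => exact fun _ ↦ ⟨by rwa [show m - 1 - 1 = m - 2 by ring], h₁⟩
    | succ t ht ih =>
      intro htM
      obtain ⟨hprev, hcur⟩ := ih (by omega)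
      have hnext := hrec (t + 1) (by omega) htM
      rw [add_sub_cancel_right, show t + 1 - 2 = t - 1 by ring, hcur, hprev] at hnext
      exact ⟨by rwa [add_sub_cancel_right], by simpa using hnext⟩
  intro t ht htM
  obtain rfl | ht := ht.eq_or_lt
  · exact h₂
  · exact (key t (by omega) htM).2

theorem eq_zero_of_two_zeros_right (h₁ : x (M - 1) = 0) (h₀ : x M = 0)
    (hrec : ∀ t, m ≤ t → t ≤ M → x t + a * x (t - 1) + x (t - 2) = 0) :
    ∀ t, m - 2 ≤ t → t ≤ M → x t = 0 := by
  have key : ∀ t, t ≤ M → m - 1 ≤ t → x (t - 1) = 0 ∧ x t = 0 := by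
    intro t ht
    induction t, ht using Int.leInductionDown with
    | base => exact fun _ ↦ ⟨h₁, h₀⟩
    | pred t ht ih =>
      intro htm
      obtain ⟨hprev, hcur⟩ := ih (by omega)
      have hrow := hrec t (by omega) ht
      rw [hcur, hprev] at hrow
      exact ⟨by rw [show t - 1 - 1 = t - 2 by ring]; simpa using hrow, hprev⟩
  intro t ht htM
  obtain rfl | htM := htM.eq_or_lt
  · exact h₀
  · simpa using (key (t + 1) (by omega) (by omega)).1

end CommRing

variable {R : Type*} [Field R] [LinearOrder R] [IsStrictOrderedRing R] {a : R} {x : ℤ → R}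
  {M : ℤ}

theorem abs_le_abs_of_two_le_abs (ha : 2 ≤ |a|) {p : ℤ} (h₁ : x (p - 1) = 0)
    (hrec : ∀ t, p + 1 ≤ t → t ≤ M → x t + a * x (t - 1) + x (t - 2) = 0) :
    ∀ t, p ≤ t → t ≤ M → |x p| ≤ |x t| := by
  have key : ∀ t, p ≤ t → t ≤ M → |x p| + |x (t - 1)| ≤ |x t| := by
    intro t ht
    induction t, ht using Int.leInduction with
    | base => simp [h₁]
    | succ t ht ih =>
      intro htM
      have hgrowth := ih (by omega)
      have hnext := hrec (t + 1) (by omega) htM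
      rw [add_sub_cancel_right, show t + 1 - 2 = t - 1 by ring] at hnext
      rw [add_sub_cancel_right]
      have : |a| * |x t| - |x (t - 1)| ≤ |x (t + 1)| := by
        rw [← abs_mul, show x (t + 1) = -(a * x t + x (t - 1)) by linarith, abs_neg]
        exact abs_sub_abs_le_abs_add _ _
      nlinarith [abs_nonneg (x t)]
  intro t ht htM
  linarith [key t ht htM, abs_nonneg (x (t - 1))]

theorem eq_zero_of_tails_of_forall_ne (ha : 2 ≤ |a|) {L U p q : ℤ}
    (hlow : ∀ t ≤ L, x t = 0) (hhigh : ∀ t ≥ U, x t = 0) (hpq : p < q)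
    (hrec : ∀ t, t ≠ p → t ≠ q → x t + a * x (t - 1) + x (t - 2) = 0) :
    x = 0 := by
  have below : ∀ t ≤ p - 1, x t = 0 := by
    have := eq_zero_of_two_zeros_left (m := L + 1) (M := p - 1) (hlow _ (by omega))
      (hlow _ (by omega)) fun t _ _ ↦ hrec t (by omega) (by omega)
    exact fun t ht ↦ if htL : t ≤ L then hlow t htL else this t (by omega) ht
  have above : ∀ t ≥ q - 1, x t = 0 := by
    have := eq_zero_of_two_zeros_right (m := q + 1) (M := U + 1) (hhigh _ (by omega))
      (hhigh _ (by omega)) fun t _ _ ↦ hrec t (by omega) (by omega)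
    exact fun t ht ↦ if htU : U + 1 < t then hhigh t (by omega) else this t (by omega) (by omega)
  have hmid : ∀ t, p + 1 ≤ t → t ≤ q - 1 → x t + a * x (t - 1) + x (t - 2) = 0 :=
    fun t _ _ ↦ hrec t (by omega) (by omega)
  have hp : x p = 0 := by
    have := abs_le_abs_of_two_le_abs ha (below _ le_rfl) hmid (q - 1) (by omega) le_rfl
    rwa [above _ le_rfl, abs_zero, abs_nonpos_iff] at this
  have between := eq_zero_of_two_zeros_left
    (by rw [show p + 1 - 2 = p - 1 by ring]; exact below _ le_rfl)
    (by rwa [add_sub_cancel_right]) hmid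
  funext t
  by_cases htp : t ≤ p - 1
  · exact below t htp
  by_cases htq : t ≤ q - 1
  · exact between t (by omega) htq
  · exact above t (by omega)

end PalindromicRecurrence

open Matrix

def zeroExtend {α : Type*} [Zero α] {n : ℕ} (v : Fin n → α) (s : ℤ) : α :=
  if h : 0 ≤ s ∧ s < n then v ⟨s.toNat, by omega⟩ else 0

section zeroExtend

variable {α : Type*} {n : ℕ}

theorem zeroExtend_of_not_mem [Zero α] (v : Fin n → α) {s : ℤ} (hs : ¬(0 ≤ s ∧ s < n)) :
    zeroExtend v s = 0 :=
  dif_neg hs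

@[simp]
theorem zeroExtend_natCast [Zero α] (v : Fin n → α) (c : Fin n) : zeroExtend v c = v c := by
  simp [zeroExtend]

theorem sum_ite_intCast_eq_zeroExtend [AddCommMonoid α] (v : Fin n → α) (s : ℤ) :
    ∑ c : Fin n, (if (c : ℤ) = s then v c else 0) = zeroExtend v s := by
  by_cases hs : 0 ≤ s ∧ s < n
  · obtain ⟨k, rfl⟩ := Int.eq_ofNat_of_zero_le hs.1
    have hk : k < n := by omega
    rw [show (k : ℤ) = ((⟨k, hk⟩ : Fin n) : ℕ) from rfl, zeroExtend_natCast]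
    rw [Finset.sum_eq_single ⟨k, hk⟩] <;> simp_all [Fin.ext_iff]
  · rw [zeroExtend_of_not_mem v hs]
    refine Finset.sum_eq_zero fun c _ ↦ if_neg fun hc ↦ hs ?_
    omega

end zeroExtend

theorem Gmat_mulVec_apply (n : ℕ) (a : ℝ) (v : Fin n → ℝ) (t : Fin (n + 2)) :
    (Gmat n a *ᵥ v) t = zeroExtend v t + a * zeroExtend v (t - 1) + zeroExtend v (t - 2) := by
  simp only [← sum_ite_intCast_eq_zeroExtend v]
  rw [mulVec, dotProduct, Finset.mul_sum, ← Finset.sum_add_distrib, ← Finset.sum_add_distrib]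
  refine Finset.sum_congr rfl fun c _ ↦ ?_
  simp only [Gmat, of_apply]
  split_ifs <;> first | (exfalso; omega) | ring

def keptRow (n i j : ℕ) (r : Fin n) : Fin (n + 2) :=
  if (r : ℕ) + 1 < i then r.castSucc.castSucc
  else if (r : ℕ) + 2 < j then r.succ.castSucc
  else r.succ.succ

theorem Gij_mulVec_apply (n : ℕ) (a : ℝ) (i j : ℕ) (v : Fin n → ℝ) (r : Fin n) :
    (Gij n a i j *ᵥ v) r = (Gmat n a *ᵥ v) (keptRow n i j r) :=
  rfl

theorem exists_keptRow_eq {n i j : ℕ} (hi : 1 ≤ i) (hij : i < j) (hj : j ≤ n + 2)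
    {t : ℕ} (ht : t < n + 2) (hti : t + 1 ≠ i) (htj : t + 1 ≠ j) :
    ∃ r, (keptRow n i j r : ℕ) = t := by
  rcases lt_or_gt_of_ne hti with hti | hti
  · exact ⟨⟨t, by omega⟩, by simp [keptRow, hti]⟩
  rcases lt_or_gt_of_ne htj with htj | htj
  · exact ⟨⟨t - 1, by omega⟩, by simp only [keptRow]; split_ifs <;> simp <;> omega⟩
  · exact ⟨⟨t - 2, by omega⟩, by simp only [keptRow]; split_ifs <;> simp <;> omega⟩

theorem zeroExtend_recurrence_of_Gij_mulVec_eq_zero {n : ℕ} {a : ℝ} {i j : ℕ} (hi : 1 ≤ i)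
    (hij : i < j) (hj : j ≤ n + 2) {v : Fin n → ℝ} (hv : Gij n a i j *ᵥ v = 0) (t : ℤ)
    (hti : t ≠ i - 1) (htj : t ≠ j - 1) :
    zeroExtend v t + a * zeroExtend v (t - 1) + zeroExtend v (t - 2) = 0 := by
  by_cases ht : 0 ≤ t ∧ t ≤ n + 1
  · lift t to ℕ using ht.1
    obtain ⟨r, hr⟩ := exists_keptRow_eq hi hij hj (t := t) (by omega) (by omega) (by omega)
    rw [← hr, ← Gmat_mulVec_apply, ← Gij_mulVec_apply, hv, Pi.zero_apply]
  · rw [zeroExtend_of_not_mem v (s := t) (by omega),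
      zeroExtend_of_not_mem v (s := t - 1) (by omega),
      zeroExtend_of_not_mem v (s := t - 2) (by omega)]
    ring

theorem stmt10_general (a : ℝ) (ha : 2 ≤ |a|) (n : ℕ)
    (i j : ℕ) (hi : 1 ≤ i) (hij : i < j) (hj : j ≤ n + 2) :
    IsUnit (Gij n a i j) ∧ (Gij n a i j).det ≠ 0 := by
  suffices hdet : (Gij n a i j).det ≠ 0 from
    ⟨(isUnit_iff_isUnit_det _).mpr hdet.isUnit, hdet⟩
  intro hdet
  obtain ⟨v, hv, hGv⟩ := exists_mulVec_eq_zero_iff.mpr hdet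
  have hzero : zeroExtend v = 0 :=
    PalindromicRecurrence.eq_zero_of_tails_of_forall_ne ha (L := -1) (U := n)
      (fun t ht ↦ zeroExtend_of_not_mem v (by omega))
      (fun t ht ↦ zeroExtend_of_not_mem v (by omega)) (by omega : (i : ℤ) - 1 < j - 1)
      (zeroExtend_recurrence_of_Gij_mulVec_eq_zero hi hij hj hGv)
  exact hv (funext fun c ↦ by simpa using congrFun hzero c)

theorem stmt10 (a : ℝ) (ha : 2 ≤ |a|) (n : ℕ) (hn : 1 ≤ n)
    (i j : ℕ) (hi : 1 ≤ i) (hij : i < j) (hj : j ≤ n + 2) :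
    IsUnit (Gij n a i j) ∧ (Gij n a i j).det ≠ 0 :=
  stmt10_general a ha n i j hi hij hj
end

section
/- Let a be a real number with a = 3 or a > 5, and let n ≥ 1 be an integer. Then for all indices 1 ≤ i < j < k ≤ n+3, the n×n matrix B_n(a,1)^{i,j,k}, obtained by deleting the i-th, j-th and k-th rows of B_n(a,1), has nonzero determinant. -/
/-- Entry in position `(r, c)` (0-indexed) of the `(n+1) × n` matrix `E_n(a,1)`. -/
def Eent (a : ℝ) (r c : ℕ) : ℝ :=
  if r = c then -a
  else if r + 1 = c then 1
  else if r = c + 1 then a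
  else if r = c + 2 then -1
  else 0

/-- The `(n+3) × n` matrix `B_n(a,1)`: first row `(1,0,…,0)`, rows `2,…,n+2` are the
rows of `E_n(a,1)`, last row `(0,…,0,-1)`. -/
def Bmat (n : ℕ) (a : ℝ) : Matrix (Fin (n + 3)) (Fin n) ℝ :=
  Matrix.of fun i j =>
    if (i : ℕ) = 0 then (if (j : ℕ) = 0 then 1 else 0)
    else if (i : ℕ) = n + 2 then (if (j : ℕ) = n - 1 then -1 else 0)
    else Eent a ((i : ℕ) - 1) (j : ℕ)

/-- `B_n(a,1)^{i,j,k}`: the `n × n` matrix obtained from `B_n(a,1)` by deleting its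
`i`-th, `j`-th and `k`-th rows (rows counted `1,…,n+3`, with `i < j < k`). -/
def Bijk (n : ℕ) (a : ℝ) (i j k : ℕ) : Matrix (Fin n) (Fin n) ℝ :=
  Matrix.of fun r c =>
    Bmat n a
      (if (r : ℕ) + 1 < i then r.castSucc.castSucc.castSucc
       else if (r : ℕ) + 2 < j then r.succ.castSucc.castSucc
       else if (r : ℕ) + 3 < k then r.succ.succ.castSucc
       else r.succ.succ.succ) c

/-! If `B_n(a,1)^{i,j,k} v = 0`, extend `v` by zero to `f : ℤ → ℝ`. Row `m` of `B_n(a,1)`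
applied to `v` is `f m - a f (m-1) + a f (m-2) - f (m-3)`, so this recurrence holds for all
`m ∈ [0, n+2]` except the three deleted rows `D_l`. Hence `f = ∑ z_l U(· - D_l)` for the
fundamental solution `U` of the recurrence, and `f n = f (n+1) = f (n+2) = 0` is a linear system
for `z` with matrix `(U (n + s - D_l))`. This matrix is nonsingular: for `a = 3`,
`U m = (m+1)(m+2)/2` and the determinant is a Vandermonde-type product; for `a > 3`, writing
`a = r + r⁻¹ + 1` with `r > 1`, `U` is a combination of `r⁻ᵐ, 1, rᵐ` and the matrix factors
through the Vandermonde matrix of `(r⁻¹, 1, r)` and a matrix with rows `q⁻¹, 1, q` for the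
distinct numbers `q_l = r ^ (n - D_l)`. So `z = 0`, hence `f = 0` and `v = 0`. -/

open Finset Function Matrix

namespace BandRecurrence

variable {a : ℝ}

def recOp (a : ℝ) (f : ℤ → ℝ) (m : ℤ) : ℝ :=
  f m - a * f (m - 1) + a * f (m - 2) - f (m - 3)

lemma eq_of_recOp_eq {f g : ℤ → ℝ} {m₀ M : ℤ}
    (hinit : ∀ m, m₀ - 2 ≤ m → m ≤ m₀ → f m = g m)
    (hrec : ∀ m, m₀ < m → m ≤ M → recOp a f m = recOp a g m) :
    ∀ m, m₀ - 2 ≤ m → m ≤ M → f m = g m := by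
  suffices h : ∀ k : ℕ, ∀ m, m₀ - 2 ≤ m → m ≤ m₀ + k → m ≤ M → f m = g m from
    fun m h₁ h₂ => h (m - m₀).toNat m h₁ (by omega) h₂
  intro k
  induction k with
  | zero => exact fun m h₁ h₂ _ => hinit m h₁ (by omega)
  | succ k ih =>
    intro m h₁ h₂ h₃
    rcases le_or_gt m (m₀ + k) with h | h
    · exact ih m h₁ h h₃
    · have hm := hrec m (by omega) h₃
      rw [recOp, recOp, ih (m - 1) (by omega) (by omega) (by omega),
        ih (m - 2) (by omega) (by omega) (by omega),
        ih (m - 3) (by omega) (by omega) (by omega)] at hm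
      linarith

lemma recOp_sum_mul {ι : Type*} (s : Finset ι) (z : ι → ℝ) (g : ι → ℤ → ℝ) (m : ℤ) :
    recOp a (fun m => ∑ l ∈ s, z l * g l m) m = ∑ l ∈ s, z l * recOp a (g l) m := by
  simp only [recOp, mul_sum, ← sum_sub_distrib, ← sum_add_distrib]
  exact sum_congr rfl fun _ _ => by ring

lemma recOp_comp_sub (f : ℤ → ℝ) (d m : ℤ) :
    recOp a (fun m => f (m - d)) m = recOp a f (m - d) := by
  simp only [recOp, sub_right_comm _ d]

lemma recOp_zpow {ρ : ℝ} (hρ : ρ ≠ 0) (hroot : ρ ^ 3 - a * ρ ^ 2 + a * ρ - 1 = 0) (m : ℤ) :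
    recOp a (fun m => ρ ^ m) m = 0 := by
  have hshift : ∀ k : ℕ, ρ ^ m = ρ ^ (m - k) * ρ ^ k := fun k => by
    rw [← zpow_natCast, ← zpow_add₀ hρ, sub_add_cancel]
  simp only [recOp]
  rw [hshift 3, show m - 1 = m - 3 + (2 : ℕ) by push_cast; ring,
    show m - 2 = m - 3 + (1 : ℕ) by push_cast; ring, zpow_add₀ hρ, zpow_add₀ hρ,
    zpow_natCast, zpow_natCast]
  linear_combination ρ ^ (m - 3) * hroot

def fundSeq (a : ℝ) : ℕ → ℝ
  | 0 => 1
  | 1 => a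
  | 2 => a ^ 2 - a
  | m + 3 => a * fundSeq a (m + 2) - a * fundSeq a (m + 1) + fundSeq a m

def fundSol (a : ℝ) (m : ℤ) : ℝ := if m < 0 then 0 else fundSeq a m.toNat

lemma fundSol_of_neg {m : ℤ} (hm : m < 0) : fundSol a m = 0 := if_pos hm

lemma fundSol_zero : fundSol a 0 = 1 := rfl

lemma recOp_fundSol (m : ℤ) : recOp a (fundSol a) m = if m = 0 then 1 else 0 := by
  rcases lt_or_ge m 3 with hm | hm
  · rcases lt_or_ge m 0 with hneg | hnonneg
    · simp [recOp, fundSol_of_neg, hneg, hneg.ne, show m - 1 < 0 by omega,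
        show m - 2 < 0 by omega, show m - 3 < 0 by omega]
    · obtain rfl | rfl | rfl : m = 0 ∨ m = 1 ∨ m = 2 := by omega
      all_goals norm_num [recOp, fundSol, fundSeq, show Int.toNat 2 = 2 from rfl] <;> ring
  · obtain ⟨t, rfl⟩ : ∃ t : ℕ, m = t + 3 := ⟨(m - 3).toNat, by omega⟩
    have hsucc : ∀ k : ℕ, fundSol a (k : ℤ) = fundSeq a k := fun k => by simp [fundSol]
    rw [if_neg (by omega), recOp, show (t : ℤ) + 3 = (t + 3 : ℕ) by push_cast; ring,
      show ((t + 3 : ℕ) : ℤ) - 1 = (t + 2 : ℕ) by push_cast; ring,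
      show ((t + 3 : ℕ) : ℤ) - 2 = (t + 1 : ℕ) by push_cast; ring,
      show ((t + 3 : ℕ) : ℤ) - 3 = t by push_cast; ring, hsucc, hsucc, hsucc, hsucc, fundSeq]
    ring

lemma eq_sum_fundSol {ι : Type*} [Fintype ι] {f : ℤ → ℝ} {D : ι → ℤ} {M : ℤ}
    (hD : Injective D) (hD₀ : ∀ l, 0 ≤ D l) (hf : ∀ m < 0, f m = 0)
    (hrec : ∀ m, 0 ≤ m → m ≤ M → m ∉ Set.range D → recOp a f m = 0) :
    ∀ m ≤ M, f m = ∑ l, recOp a f (D l) * fundSol a (m - D l) := by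
  have hneg : ∀ m < 0, f m = ∑ l, recOp a f (D l) * fundSol a (m - D l) := fun m hm => by
    rw [hf m hm]
    exact (sum_eq_zero fun l _ => by rw [fundSol_of_neg (by linarith [hD₀ l]), mul_zero]).symm
  intro m hm
  rcases lt_or_ge m 0 with hlow | hhigh
  · exact hneg m hlow
  refine eq_of_recOp_eq (a := a) (m₀ := -1) (fun m _ h => hneg m (by omega))
    (fun m h₁ h₂ => ?_) m (by omega) hm
  simp only [recOp_sum_mul, recOp_comp_sub, recOp_fundSol, sub_eq_zero, mul_ite, mul_one,
    mul_zero]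
  by_cases hmD : m ∈ Set.range D
  · obtain ⟨l, rfl⟩ := hmD
    rw [sum_eq_single l (fun x _ hx => if_neg (hD.ne hx).symm) (by simp), if_pos rfl]
  · rw [hrec m (by omega) h₂ hmD, sum_eq_zero fun l _ => if_neg fun h => hmD ⟨l, h.symm⟩]

variable {n : ℕ}

noncomputable def zeroExtend (v : Fin n → ℝ) : ℤ → ℝ := extend (fun c : Fin n => (c : ℤ)) v 0

lemma zeroExtend_coe (v : Fin n → ℝ) (c : Fin n) : zeroExtend v c = v c :=
  (Nat.cast_injective.comp Fin.val_injective).extend_apply v 0 c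

lemma zeroExtend_eq_zero (v : Fin n → ℝ) {m : ℤ} (hm : m < 0 ∨ n ≤ m) :
    zeroExtend v m = 0 :=
  extend_apply' _ _ _ fun ⟨c, hc⟩ => by have := c.isLt; omega

lemma sum_ite_mul_eq_zeroExtend (v : Fin n → ℝ) (x : ℤ) :
    ∑ c : Fin n, (if (c : ℤ) = x then 1 else 0) * v c = zeroExtend v x := by
  by_cases hx : ∃ c : Fin n, (c : ℤ) = x
  · obtain ⟨c, rfl⟩ := hx
    rw [zeroExtend_coe, sum_eq_single c (fun d _ hd => by simp [Fin.val_injective.ne hd])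
      (by simp)]
    simp
  · rw [zeroExtend, extend_apply' _ _ _ hx]
    exact sum_eq_zero fun c _ => by rw [if_neg fun h => hx ⟨c, h⟩, zero_mul]

lemma Bmat_apply (m : Fin (n + 3)) (c : Fin n) :
    Bmat n a m c = (if (c : ℤ) = m then 1 else 0) - a * (if (c : ℤ) = m - 1 then 1 else 0)
      + a * (if (c : ℤ) = m - 2 then 1 else 0) - (if (c : ℤ) = m - 3 then 1 else 0) := by
  have := c.isLt
  simp only [Bmat, Eent, of_apply]
  split_ifs <;> first | ring1 | omega

lemma Bmat_mulVec_apply (v : Fin n → ℝ) (m : Fin (n + 3)) :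
    (Bmat n a *ᵥ v) m = recOp a (zeroExtend v) m := by
  simp only [mulVec, dotProduct, Bmat_apply, sub_mul, add_mul, mul_assoc, sum_sub_distrib,
    sum_add_distrib, ← mul_sum, sum_ite_mul_eq_zeroExtend, recOp]

def keptRow (n i j k : ℕ) (r : Fin n) : Fin (n + 3) :=
  if (r : ℕ) + 1 < i then r.castSucc.castSucc.castSucc
  else if (r : ℕ) + 2 < j then r.succ.castSucc.castSucc
  else if (r : ℕ) + 3 < k then r.succ.succ.castSucc
  else r.succ.succ.succ

lemma Bijk_mulVec_apply (i j k : ℕ) (v : Fin n → ℝ) (r : Fin n) :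
    (Bijk n a i j k *ᵥ v) r = (Bmat n a *ᵥ v) (keptRow n i j k r) := rfl

lemma exists_keptRow_eq {i j k : ℕ} (hi : 1 ≤ i) (hij : i < j) (hjk : j < k) (hk : k ≤ n + 3)
    (m : Fin (n + 3)) (hm : (m : ℕ) + 1 ≠ i ∧ (m : ℕ) + 1 ≠ j ∧ (m : ℕ) + 1 ≠ k) :
    ∃ r, keptRow n i j k r = m := by
  have := m.isLt
  refine ⟨⟨if (m : ℕ) + 1 < i then m else if (m : ℕ) + 1 < j then m - 1
    else if (m : ℕ) + 1 < k then m - 2 else m - 3, by split_ifs <;> omega⟩, ?_⟩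
  ext
  simp only [keptRow]
  split_ifs <;> simp only [Fin.succ_mk, Fin.castSucc_mk, Fin.eta] <;> omega

lemma recOp_zeroExtend_eq_zero {i j k : ℕ} (hi : 1 ≤ i) (hij : i < j) (hjk : j < k)
    (hk : k ≤ n + 3) {v : Fin n → ℝ} (hv : Bijk n a i j k *ᵥ v = 0) (m : ℤ) (hm₀ : 0 ≤ m)
    (hm : m ≤ n + 2) (hmD : m ∉ Set.range ![(i : ℤ) - 1, j - 1, k - 1]) :
    recOp a (zeroExtend v) m = 0 := by
  lift m to ℕ using hm₀
  simp only [range_cons, range_empty, Set.union_empty, Set.union_singleton, Set.union_insert,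
    Set.mem_insert_iff, Set.mem_singleton_iff, not_or] at hmD
  obtain ⟨r, hr⟩ := exists_keptRow_eq hi hij hjk hk ⟨m, by omega⟩ (by dsimp only; omega)
  have := congrFun hv r
  rwa [Bijk_mulVec_apply, hr, Bmat_mulVec_apply] at this

def fundSolMatrix (a : ℝ) (N : ℤ) (D : Fin 3 → ℤ) : Matrix (Fin 3) (Fin 3) ℝ :=
  of fun s l => fundSol a (N + s - D l)

lemma eq_zero_of_recOp_eq_zero_off {f : ℤ → ℝ} {N : ℤ} {D : Fin 3 → ℤ} (hD : Injective D)
    (hD₀ : ∀ l, 0 ≤ D l) (hdet : (fundSolMatrix a N D).det ≠ 0)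
    (hf : ∀ m, m < 0 ∨ N ≤ m → f m = 0)
    (hrec : ∀ m, 0 ≤ m → m ≤ N + 2 → m ∉ Set.range D → recOp a f m = 0) :
    f = 0 := by
  have hsum := eq_sum_fundSol hD hD₀ (fun m hm => hf m (.inl hm)) hrec
  have hz : (fun l => recOp a f (D l)) = 0 := by
    refine eq_zero_of_mulVec_eq_zero hdet (funext fun s => ?_)
    rw [Pi.zero_apply, ← hf (N + s) (.inr (by omega)), hsum _ (by omega)]
    simp only [mulVec, dotProduct, fundSolMatrix, of_apply, mul_comm]
  funext m
  rcases le_or_gt m (N + 2) with hm | hm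
  · simp [hsum m hm, congrFun hz]
  · exact hf m (.inr (by omega))

lemma fundSol_three {m : ℤ} (hm : -2 ≤ m) : fundSol 3 m = (m + 1) * (m + 2) / 2 := by
  refine eq_of_recOp_eq (a := 3) (g := fun m : ℤ => ((m : ℝ) + 1) * (m + 2) / 2) (m₀ := 0)
    (fun m h₁ h₂ => ?_) (fun m h₁ _ => ?_) m hm le_rfl
  · obtain rfl | rfl | rfl : m = -2 ∨ m = -1 ∨ m = 0 := by omega
    all_goals norm_num [fundSol, fundSeq]
  · rw [recOp_fundSol, if_neg h₁.ne', recOp]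
    push_cast
    ring

lemma det_fundSolMatrix_three {N : ℤ} {D : Fin 3 → ℤ} (hD : ∀ l, D l ≤ N + 2) :
    (fundSolMatrix 3 N D).det = (D 1 - D 0) * (D 2 - D 0) * (D 2 - D 1) / 2 := by
  have h (s l : Fin 3) :
      fundSol 3 (N + s - D l) = (N + s - D l + 1) * (N + s - D l + 2) / 2 := by
    rw [fundSol_three (by have := hD l; omega)]
    push_cast
    ring
  simp only [det_fin_three, fundSolMatrix, of_apply, h, Fin.val_zero, Fin.val_one, Fin.val_two]
  push_cast
  ring

variable {r : ℝ}

lemma exists_one_lt_add_inv_add_one_eq (ha : 3 < a) : ∃ r : ℝ, 1 < r ∧ r + r⁻¹ + 1 = a := by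
  have hsq : √((a - 1) ^ 2 - 4) ^ 2 = (a - 1) ^ 2 - 4 := Real.sq_sqrt (by nlinarith)
  refine ⟨((a - 1) + √((a - 1) ^ 2 - 4)) / 2,
    by linarith [Real.sqrt_nonneg ((a - 1) ^ 2 - 4)], ?_⟩
  rw [inv_eq_of_mul_eq_one_right (b := ((a - 1) - √((a - 1) ^ 2 - 4)) / 2)
    (by linear_combination -hsq / 4)]
  ring

/-- For `a = r + r⁻¹ + 1` the characteristic polynomial `t³ - a t² + a t - 1` has the roots
`r⁻¹, 1, r`; these coefficients fit the initial values `0, 0, 1` of `fundSol` at `-2, -1, 0`. -/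
noncomputable def modeCoeff (r : ℝ) : Fin 3 → ℝ :=
  ![1 / ((r - 1) ^ 2 * (r + 1)), -r / (r - 1) ^ 2, r ^ 3 / ((r - 1) ^ 2 * (r + 1))]

lemma fundSol_eq_sum_modes (hr : 1 < r) {m : ℤ} (hm : -2 ≤ m) :
    fundSol (r + r⁻¹ + 1) m = ∑ t, modeCoeff r t * ![r⁻¹, 1, r] t ^ m := by
  have hr₀ : r ≠ 0 := by positivity
  have hr₁ : r - 1 ≠ 0 := sub_ne_zero.2 hr.ne'
  have hr₂ : r + 1 ≠ 0 := by positivity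
  refine eq_of_recOp_eq (a := r + r⁻¹ + 1)
    (g := fun m => ∑ t, modeCoeff r t * ![r⁻¹, 1, r] t ^ m) (m₀ := 0) (M := m)
    (fun m h₁ h₂ => ?_) (fun m h₁ _ => ?_) m hm le_rfl
  · obtain rfl | rfl | rfl : m = -2 ∨ m = -1 ∨ m = 0 := by omega
    all_goals
      simp only [fundSol_of_neg (show (-2 : ℤ) < 0 by norm_num),
        fundSol_of_neg (show (-1 : ℤ) < 0 by norm_num), fundSol_zero, Fin.sum_univ_three,
        modeCoeff, Matrix.cons_val, _root_.zpow_neg, zpow_ofNat, one_pow, inv_pow, inv_inv, inv_one,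
        pow_zero, pow_one]
      field_simp
      ring
  · rw [recOp_fundSol, if_neg h₁.ne', recOp_sum_mul (g := fun t m => ![r⁻¹, 1, r] t ^ m)]
    refine (sum_eq_zero fun t _ => ?_).symm
    rw [recOp_zpow, mul_zero]
    · fin_cases t <;> simp [hr₀]
    · fin_cases t <;> simp <;> field_simp <;> ring

lemma det_inv_one_self_ne_zero {K : Type*} [Field K] {q : Fin 3 → K} (hq : Injective q)
    (hq₀ : ∀ l, q l ≠ 0) : (of ![q⁻¹, 1, q]).det ≠ 0 := by
  have h₀ := hq₀ 0
  have h₁ := hq₀ 1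
  have h₂ := hq₀ 2
  rw [show (of ![q⁻¹, 1, q]).det = (q 1 - q 0) * (q 2 - q 0) * (q 2 - q 1) / (q 0 * q 1 * q 2) by
    rw [det_fin_three]
    simp only [of_apply, Matrix.cons_val, Pi.inv_apply, Pi.one_apply]
    field_simp
    ring]
  exact div_ne_zero (mul_ne_zero (mul_ne_zero (sub_ne_zero.2 (hq.ne (by decide)))
    (sub_ne_zero.2 (hq.ne (by decide)))) (sub_ne_zero.2 (hq.ne (by decide))))
    (mul_ne_zero (mul_ne_zero h₀ h₁) h₂)

lemma fundSolMatrix_eq_mul (hr : 1 < r) {N : ℤ} {D : Fin 3 → ℤ} (hD : ∀ l, D l ≤ N + 2) :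
    fundSolMatrix (r + r⁻¹ + 1) N D = (vandermonde ![r⁻¹, 1, r])ᵀ * diagonal (modeCoeff r) *
      of fun t l => ![r⁻¹, 1, r] t ^ (N - D l) := by
  have hr₀ : r ≠ 0 := by positivity
  ext s l
  rw [mul_apply]
  simp only [fundSolMatrix, of_apply, mul_diagonal, transpose_apply, vandermonde_apply]
  rw [fundSol_eq_sum_modes hr (by have := hD l; omega)]
  refine sum_congr rfl fun t _ => ?_
  have hρ : ![r⁻¹, 1, r] t ≠ 0 := by fin_cases t <;> simp [hr₀]
  rw [show N + s - D l = (s : ℕ) + (N - D l) by ring, zpow_add₀ hρ, zpow_natCast]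
  ring

lemma det_fundSolMatrix_ne_zero_of_one_lt (hr : 1 < r) {N : ℤ} {D : Fin 3 → ℤ}
    (hD : Injective D) (hDN : ∀ l, D l ≤ N + 2) : (fundSolMatrix (r + r⁻¹ + 1) N D).det ≠ 0 := by
  have hr₀ : r ≠ 0 := by positivity
  have hr₁ : r - 1 ≠ 0 := sub_ne_zero.2 hr.ne'
  have hr₂ : r + 1 ≠ 0 := by positivity
  have hinv : r⁻¹ < 1 := inv_lt_one_of_one_lt₀ hr
  rw [fundSolMatrix_eq_mul hr hDN, det_mul, det_mul, det_transpose, det_diagonal]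
  refine mul_ne_zero (mul_ne_zero ?_ ?_) ?_
  · refine det_vandermonde_ne_zero_iff.2 (StrictMono.injective ?_)
    exact Fin.strictMono_iff_lt_succ.2 fun t => by fin_cases t <;> simp [hinv, hr]
  · exact prod_ne_zero_iff.2 fun t _ => by fin_cases t <;> simp [modeCoeff, hr₀, hr₁, hr₂]
  · have hq : (of fun t l => ![r⁻¹, 1, r] t ^ (N - D l)) = of ![(fun l => r ^ (N - D l))⁻¹, 1,
        fun l => r ^ (N - D l)] := by
      ext t l
      fin_cases t <;> simp [← _root_.zpow_neg]
    rw [hq]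
    exact det_inv_one_self_ne_zero ((zpow_right_strictMono₀ hr).injective.comp
      (sub_right_injective.comp hD)) fun l => zpow_ne_zero _ hr₀

lemma det_fundSolMatrix_ne_zero {a : ℝ} (ha : a = 3 ∨ 3 < a) {N : ℤ} {D : Fin 3 → ℤ}
    (hD : Injective D) (hDN : ∀ l, D l ≤ N + 2) : (fundSolMatrix a N D).det ≠ 0 := by
  rcases ha with rfl | ha
  · rw [det_fundSolMatrix_three hDN]
    have hne : ∀ l l', l ≠ l' → ((D l : ℤ) : ℝ) - D l' ≠ 0 := fun l l' h =>
      sub_ne_zero.2 (Int.cast_injective.ne (hD.ne h))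
    exact div_ne_zero (mul_ne_zero (mul_ne_zero (hne _ _ (by decide)) (hne _ _ (by decide)))
      (hne _ _ (by decide))) two_ne_zero
  · obtain ⟨r, hr, rfl⟩ := exists_one_lt_add_inv_add_one_eq ha
    exact det_fundSolMatrix_ne_zero_of_one_lt hr hD hDN

end BandRecurrence

open BandRecurrence

theorem stmt11_general (a : ℝ) (ha : a = 3 ∨ 5 < a) (n : ℕ)
    (i j k : ℕ) (hi : 1 ≤ i) (hij : i < j) (hjk : j < k) (hk : k ≤ n + 3) :
    (Bijk n a i j k).det ≠ 0 := by
  intro hdet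
  obtain ⟨v, hv₀, hv⟩ := exists_mulVec_eq_zero_iff.2 hdet
  set D : Fin 3 → ℤ := ![(i : ℤ) - 1, j - 1, k - 1]
  have hD : StrictMono D :=
    Fin.strictMono_iff_lt_succ.2 fun t => by fin_cases t <;> simp [D] <;> omega
  have hD₀ : ∀ l, 0 ≤ D l := fun l => by fin_cases l <;> simp [D] <;> omega
  have hDN : ∀ l, D l ≤ n + 2 := fun l => by fin_cases l <;> simp [D] <;> omega
  have hzero := eq_zero_of_recOp_eq_zero_off hD.injective hD₀
    (det_fundSolMatrix_ne_zero (ha.imp_right fun h => by linarith) hD.injective hDN)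
    (fun _ => zeroExtend_eq_zero v) (recOp_zeroExtend_eq_zero hi hij hjk hk hv)
  exact hv₀ (funext fun c => by rw [← zeroExtend_coe v c, hzero, Pi.zero_apply, Pi.zero_apply])

theorem stmt11 (a : ℝ) (ha : a = 3 ∨ 5 < a) (n : ℕ) (hn : 1 ≤ n)
    (i j k : ℕ) (hi : 1 ≤ i) (hij : i < j) (hjk : j < k) (hk : k ≤ n + 3) :
    (Bijk n a i j k).det ≠ 0 :=
  stmt11_general a ha n i j k hi hij hjk hk
end

section
/- Let a be a real number with a = 3 or a > 5, and let n ≥ 1 be an integer. Then the n columns of B_n(a,1), regarded as vectors in ℂ^{n+3}, are linearly independent, and every nonzero complex linear combination of these columns has at least 4 nonzero entries. -/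
/-!
Column `j` of `B_n(a,1)` is the coefficient vector of `X ^ j * q` with
`q = 1 - a X + a X² - X³ = (1 - X) (1 - (a - 1) X + X²)`. Its top `n × n` block is unitriangular,
which gives independence. Every sequence `g` satisfying the linear recurrence with characteristic
polynomial `q` is orthogonal to all columns, and the roots of `q` provide three such sequences of
the Vandermonde form `c i * u i ^ k`, `k < 3`, with `u` injective: `u i = i` when `a = 3` (where
`1` is a triple root), and `c i = r⁻¹ ^ i`, `u i = r ^ i` when `a > 3` (roots `r⁻¹, 1, r`).
A vector with at most three nonzero entries that is annihilated by such a system vanishes.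
-/

open Finset

theorem Finset.eq_zero_of_sum_mul_pow_eq_zero {ι K : Type*} [Field K] {T : Finset ι}
    {u w : ι → K} (hu : Set.InjOn u T) (h : ∀ k < #T, ∑ i ∈ T, w i * u i ^ k = 0) :
    ∀ i ∈ T, w i = 0 := by
  set e := T.equivFin
  have hv : (fun p => w (e.symm p)) = 0 := by
    refine Matrix.eq_zero_of_forall_pow_sum_mul_pow_eq_zero (f := fun p => u (e.symm p))
      (fun p q hpq => e.symm.injective (Subtype.ext (hu (e.symm p).2 (e.symm q).2 hpq))) ?_
    intro k
    rw [← h k k.isLt, ← Finset.sum_coe_sort T]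
    exact e.symm.sum_comp (fun i : T => w i * u i ^ (k : ℕ))
  intro i hi
  simpa using congrFun hv (e ⟨i, hi⟩)

theorem lt_card_filter_ne_zero_of_sum_mul_pow_eq_zero {ι K : Type*} [Fintype ι] [Field K]
    [DecidableEq K] {m : ℕ} {c u y : ι → K} (hc : ∀ i, c i ≠ 0) (hu : Function.Injective u)
    (hy : y ≠ 0) (h : ∀ k < m, ∑ i, c i * u i ^ k * y i = 0) : m < #{i | y i ≠ 0} := by
  by_contra! hm
  obtain ⟨i, hi⟩ : ∃ i, y i ≠ 0 := Function.ne_iff.mp hy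
  have hiT : i ∈ ({i | y i ≠ 0} : Finset ι) := by simpa using hi
  refine mul_ne_zero hi (hc i)
    (eq_zero_of_sum_mul_pow_eq_zero (w := fun i => y i * c i) hu.injOn (fun k hk => ?_) i hiT)
  calc ∑ i ∈ {i | y i ≠ 0}, y i * c i * u i ^ k = ∑ i, c i * u i ^ k * y i := by
        rw [sum_filter_of_ne fun i _ h => left_ne_zero_of_mul (left_ne_zero_of_mul h)]
        exact sum_congr rfl fun i _ => by ring
    _ = 0 := h k (hk.trans_le hm)

theorem Matrix.linearIndependent_col_of_isUnit_submatrix {m n K : Type*} [Fintype n]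
    [DecidableEq n] [Field K] (A : Matrix m n K) (e : n → m) (h : IsUnit (A.submatrix e id)) :
    LinearIndependent K fun j i => A i j :=
  (Matrix.linearIndependent_cols_iff_isUnit.mpr h).of_comp (LinearMap.funLeft K K e)

def SolvesRecurrence (a : ℂ) (g : ℕ → ℂ) : Prop :=
  ∀ k, g k - a * g (k + 1) + a * g (k + 2) - g (k + 3) = 0

theorem solvesRecurrence_pow {a t : ℂ} (ht : 1 - a * t + a * t ^ 2 - t ^ 3 = 0) :
    SolvesRecurrence a (t ^ ·) :=
  fun k => by linear_combination t ^ k * ht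

theorem solvesRecurrence_three_natCast_pow {k : ℕ} (hk : k < 3) :
    SolvesRecurrence 3 (fun i => (i : ℂ) ^ k) := by
  intro i
  interval_cases k <;> push_cast <;> ring

theorem exists_one_lt_root {a : ℝ} (ha : 3 < a) :
    ∃ r : ℝ, 1 < r ∧ r ^ 2 - (a - 1) * r + 1 = 0 := by
  have hdisc : 0 ≤ (a - 1) ^ 2 - 4 := by nlinarith
  refine ⟨((a - 1) + √((a - 1) ^ 2 - 4)) / 2, ?_, ?_⟩
  · linarith [Real.sqrt_nonneg ((a - 1) ^ 2 - 4)]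
  · linear_combination Real.sq_sqrt hdisc / 4

theorem exists_vandermonde_solvesRecurrence {a : ℝ} (ha : a = 3 ∨ 3 < a) :
    ∃ c u : ℕ → ℂ, (∀ i, c i ≠ 0) ∧ Function.Injective u ∧
      ∀ k < 3, SolvesRecurrence a fun i => c i * u i ^ k := by
  rcases ha with rfl | ha
  · refine ⟨1, (↑), fun _ => one_ne_zero, Nat.cast_injective, fun k hk => ?_⟩
    simpa using solvesRecurrence_three_natCast_pow hk
  obtain ⟨r, hr1, hr⟩ := exists_one_lt_root ha
  have hr0 : (r : ℂ) ≠ 0 := by exact_mod_cast (zero_lt_one.trans hr1).ne'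
  have hrC : (r : ℂ) ^ 2 - (a - 1) * r + 1 = 0 := by exact_mod_cast hr
  refine ⟨fun i => (r : ℂ)⁻¹ ^ i, fun i => (r : ℂ) ^ i, fun i => by simp [hr0], ?_, ?_⟩
  · intro i j hij
    exact pow_right_injective₀ (zero_lt_one.trans hr1) hr1.ne'
      (Complex.ofReal_injective (by push_cast; exact hij))
  · intro k hk
    have hpow : (fun i => (r : ℂ)⁻¹ ^ i * ((r : ℂ) ^ i) ^ k) = (((r : ℂ)⁻¹ * r ^ k) ^ ·) := by
      ext i
      rw [← pow_mul, mul_comm i k, pow_mul, mul_pow]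
    rw [hpow]
    apply solvesRecurrence_pow
    interval_cases k
    · field_simp
      linear_combination (r - 1 : ℂ) * hrC
    · field_simp
      ring
    · field_simp
      linear_combination (1 - r : ℂ) * hrC

noncomputable def bandEntry (a : ℂ) (i j : ℕ) : ℂ :=
  if i = j then 1 else if i = j + 1 then -a else if i = j + 2 then a
  else if i = j + 3 then -1 else 0

theorem sum_mul_bandEntry (a : ℂ) (g : ℕ → ℂ) {m j : ℕ} (hj : j + 3 < m) :
    ∑ i ∈ range m, g i * bandEntry a i j = g j - a * g (j + 1) + a * g (j + 2) - g (j + 3) := by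
  have hsplit : ∀ i, g i * bandEntry a i j = (if i = j then g j else 0)
      + (if i = j + 1 then -a * g (j + 1) else 0) + (if i = j + 2 then a * g (j + 2) else 0)
      + (if i = j + 3 then -g (j + 3) else 0) := by
    intro i
    unfold bandEntry
    split_ifs <;> first | (exfalso; omega) | (subst_vars; ring1)
  simp only [hsplit, sum_add_distrib, sum_ite_eq', mem_range]
  rw [if_pos (by omega), if_pos (by omega), if_pos (by omega), if_pos (by omega)]
  ring

namespace Bmat

theorem ofReal_apply (n : ℕ) (a : ℝ) (i : Fin (n + 3)) (j : Fin n) :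
    ((Bmat n a i j : ℝ) : ℂ) = bandEntry a i j := by
  have hj := j.isLt
  simp only [Bmat, Eent, Matrix.of_apply, bandEntry]
  split_ifs <;> first | (exfalso; omega) | simp

theorem sum_mul_col (n : ℕ) (a : ℝ) (g : ℕ → ℂ) (j : Fin n) :
    ∑ i : Fin (n + 3), g i * (Bmat n a i j : ℂ)
      = g j - a * g (j + 1) + a * g (j + 2) - g (j + 3) := by
  simp only [ofReal_apply]
  rw [Fin.sum_univ_eq_sum_range (fun i => g i * bandEntry a i j)]
  exact sum_mul_bandEntry _ _ (by omega)

theorem sum_mul_mulVec_eq_zero (n : ℕ) {a : ℝ} {g : ℕ → ℂ} (hg : SolvesRecurrence a g)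
    (lam : Fin n → ℂ) : ∑ i : Fin (n + 3), g i * ∑ j, lam j * (Bmat n a i j : ℂ) = 0 := by
  simp only [mul_sum]
  rw [sum_comm]
  refine sum_eq_zero fun j _ => ?_
  simp only [mul_left_comm (g _), ← mul_sum, sum_mul_col, hg j, mul_zero]

theorem isUnit_ofReal_submatrix_castLE (n : ℕ) (a : ℝ) :
    IsUnit (((Bmat n a).map ((↑) : ℝ → ℂ)).submatrix (Fin.castLE (Nat.le_add_right n 3)) id) := by
  rw [Matrix.isUnit_iff_isUnit_det, Matrix.det_of_isLowerTriangular]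
  · simp [ofReal_apply, bandEntry]
  · intro i j hij
    simp only [Matrix.submatrix_apply, Matrix.map_apply, ofReal_apply, bandEntry]
    have : (i : ℕ) < j := hij
    split_ifs <;> first | (exfalso; simp at *; omega) | rfl

end Bmat

theorem stmt13_general (a : ℝ) (ha : a = 3 ∨ 5 < a) (n : ℕ) :
    LinearIndependent ℂ
        (fun j : Fin n => fun i : Fin (n + 3) => ((Bmat n a i j : ℝ) : ℂ)) ∧
      ∀ lam : Fin n → ℂ,
        (fun i : Fin (n + 3) => ∑ j, lam j * ((Bmat n a i j : ℝ) : ℂ)) ≠ 0 →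
        4 ≤ Set.ncard {i : Fin (n + 3) | ∑ j, lam j * ((Bmat n a i j : ℝ) : ℂ) ≠ 0} := by
  have hindep := Matrix.linearIndependent_col_of_isUnit_submatrix _ _
    (Bmat.isUnit_ofReal_submatrix_castLE n a)
  refine ⟨hindep, fun lam hy => ?_⟩
  obtain ⟨c, u, hc, hu, hsol⟩ :=
    exists_vandermonde_solvesRecurrence (ha.imp_right fun h5 => by linarith)
  rw [Set.ncard_eq_toFinset_card', Set.toFinset_ofPred]
  exact lt_card_filter_ne_zero_of_sum_mul_pow_eq_zero (m := 3) (c := fun i : Fin (n + 3) => c i)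
    (fun i => hc i) (hu.comp Fin.val_injective) hy
    fun k hk => Bmat.sum_mul_mulVec_eq_zero n (hsol k hk) lam

theorem stmt13 (a : ℝ) (ha : a = 3 ∨ 5 < a) (n : ℕ) (hn : 1 ≤ n) :
    LinearIndependent ℂ
        (fun j : Fin n => fun i : Fin (n + 3) => ((Bmat n a i j : ℝ) : ℂ)) ∧
      ∀ lam : Fin n → ℂ,
        (fun i : Fin (n + 3) => ∑ j, lam j * ((Bmat n a i j : ℝ) : ℂ)) ≠ 0 →
        4 ≤ Set.ncard {i : Fin (n + 3) | ∑ j, lam j * ((Bmat n a i j : ℝ) : ℂ) ≠ 0} :=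
  stmt13_general a ha n
end

section
/- Let a be a real number with |a| > 5, and let n ≥ 1 be an integer. Then the n columns of B̃_n(a,1), regarded as vectors in ℂ^{n+3}, are linearly independent, and every nonzero complex linear combination of these columns has at least 4 nonzero entries. -/
/-- Entry in position `(r, c)` (0-indexed) of the `(n+1) × n` matrix `Ẽ_n(a,1)`. -/
def Etent (a : ℝ) (r c : ℕ) : ℝ :=
  if r = c then a
  else if r + 1 = c then 1
  else if r = c + 1 then a
  else if r = c + 2 then 1
  else 0

/-- The `(n+3) × n` matrix `B̃_n(a,1)`: first row `(1,0,…,0)`, rows `2,…,n+2` are the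
rows of `Ẽ_n(a,1)`, last row `(0,…,0,1)`. -/
def Btmat (n : ℕ) (a : ℝ) : Matrix (Fin (n + 3)) (Fin n) ℝ :=
  Matrix.of fun i j =>
    if (i : ℕ) = 0 then (if (j : ℕ) = 0 then 1 else 0)
    else if (i : ℕ) = n + 2 then (if (j : ℕ) = n - 1 then 1 else 0)
    else Etent a ((i : ℕ) - 1) (j : ℕ)

/-!
Column `j` of `B̃_n(a,1)` is the coefficient vector of `X ^ j * Q` with
`Q = X³ + aX² + aX + 1 = (X + 1)(X² + (a - 1)X + 1)`, so a combination with weights `λ` is the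
coefficient vector of `P * Q`, `P = ∑ λ_j X ^ j`. As `|a - 1| > 2`, `Q` has the real roots
`-1, r, r⁻¹` with `|r| > 1`. If `P * Q ≠ 0` had at most three monomials `X^α, X^β, X^γ`, its
coefficients would lie in the kernel of the matrix `(z_i ^ e_k)` at these three roots.
Pulling the sign of `r` out of each column turns it into `[u v w; u⁻¹ v⁻¹ w⁻¹; ±1 ±1 ±1]`
with `0 < u < v < w`, whose determinant is nonzero because the middle cofactor `w/u - u/w`
exceeds the sum of the other two by `(w - v)(v - u)(w - u)/(uvw)`.
-/

open Polynomial

theorem Polynomial.eq_zero_of_support_subset_of_det_ne_zero {R : Type*} [CommRing R] [IsDomain R]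
    {m : ℕ} {p : R[X]} {e : Fin m → ℕ} (he : Function.Injective e)
    (hp : (p.support : Set ℕ) ⊆ Set.range e) {z : Fin m → R}
    (hdet : (Matrix.of fun i k => z i ^ e k).det ≠ 0) (hz : ∀ i, p.eval (z i) = 0) : p = 0 := by
  have hsupp : p.support ⊆ Finset.univ.map ⟨e, he⟩ := fun n hn => by
    obtain ⟨k, rfl⟩ := hp hn
    simp
  have heval : ∀ x, p.eval x = ∑ k, x ^ e k * p.coeff (e k) := fun x => by
    rw [eval_eq_sum, sum_def, Finset.sum_subset hsupp fun n _ hn => by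
      rw [notMem_support_iff.mp hn, zero_mul], Finset.sum_map]
    simp only [Function.Embedding.coeFn_mk, mul_comm]
  have hcoeff : (fun k => p.coeff (e k)) = 0 := by
    refine Matrix.eq_zero_of_mulVec_eq_zero hdet ?_
    ext i
    simpa [Matrix.mulVec, dotProduct, ← heval] using hz i
  ext n
  by_cases hn : n ∈ p.support
  · obtain ⟨k, rfl⟩ := hp hn
    exact congrFun hcoeff k
  · exact notMem_support_iff.mp hn

theorem det_ne_zero_of_lt_of_abs_eq_one {u v w d₀ d₁ d₂ : ℝ} (hu : 0 < u) (huv : u < v)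
    (hvw : v < w) (hd₀ : |d₀| = 1) (hd₁ : |d₁| = 1) (hd₂ : |d₂| = 1) :
    !![u, v, w; u⁻¹, v⁻¹, w⁻¹; d₀, d₁, d₂].det ≠ 0 := by
  have hv : 0 < v := hu.trans huv
  have hw : 0 < w := hv.trans hvw
  have hwv : 0 < w / v - v / w := by
    rw [sub_pos, div_lt_div_iff₀ hw hv]; nlinarith
  have hvu : 0 < v / u - u / v := by
    rw [sub_pos, div_lt_div_iff₀ hv hu]; nlinarith
  have hgap : w / v - v / w + (v / u - u / v) < w / u - u / w := by
    have hpos : 0 < (w - v) * (v - u) * (w - u) / (u * v * w) := by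
      apply div_pos _ (by positivity)
      exact mul_pos (mul_pos (by linarith) (by linarith)) (by linarith)
    have h : w / u - u / w - (w / v - v / w + (v / u - u / v))
        = (w - v) * (v - u) * (w - u) / (u * v * w) := by
      field_simp; ring
    linarith
  have hdet : !![u, v, w; u⁻¹, v⁻¹, w⁻¹; d₀, d₁, d₂].det
      = d₁ * (w / u - u / w) - (d₀ * (w / v - v / w) + d₂ * (v / u - u / v)) := by
    simp only [Matrix.det_fin_three, Fin.isValue, Matrix.of_apply, Matrix.cons_val',
      Matrix.cons_val_zero, Matrix.cons_val_fin_one, Matrix.cons_val_one, Matrix.cons_val]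
    field_simp
    ring
  have hsmall : |d₀ * (w / v - v / w) + d₂ * (v / u - u / v)| < |d₁ * (w / u - u / w)| := by
    calc |d₀ * (w / v - v / w) + d₂ * (v / u - u / v)|
        ≤ |d₀ * (w / v - v / w)| + |d₂ * (v / u - u / v)| := abs_add_le _ _
      _ = w / v - v / w + (v / u - u / v) := by
        rw [abs_mul, abs_mul, hd₀, hd₂, abs_of_pos hwv, abs_of_pos hvu, one_mul, one_mul]
      _ < |d₁ * (w / u - u / w)| := by
        rwa [abs_mul, hd₁, one_mul, abs_of_pos (hwv.trans (by linarith))]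
  rw [hdet, sub_ne_zero]
  exact fun h => hsmall.ne (by rw [h])

theorem det_pow_ne_zero_of_one_lt_abs {r : ℝ} (hr : 1 < |r|) {e : Fin 3 → ℕ}
    (he : StrictMono e) : (Matrix.of fun i k => ![r, r⁻¹, -1] i ^ e k).det ≠ 0 := by
  obtain ⟨σ, hσ, hrσ⟩ : ∃ σ : ℝ, |σ| = 1 ∧ r = σ * |r| := by
    rcases le_total 0 r with h | h
    · exact ⟨1, by simp, by rw [abs_of_nonneg h, one_mul]⟩
    · exact ⟨-1, by simp, by rw [abs_of_nonpos h]; ring⟩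
  have hσσ : σ * σ = 1 := by rw [← abs_mul_abs_self, hσ, one_mul]
  set s := |r|
  have hs : 0 < s := one_pos.trans hr
  have hfactor : (Matrix.of fun i k => ![r, r⁻¹, -1] i ^ e k) = Matrix.of fun i k => σ ^ e k *
      !![s ^ e 0, s ^ e 1, s ^ e 2; (s ^ e 0)⁻¹, (s ^ e 1)⁻¹, (s ^ e 2)⁻¹;
        (-σ) ^ e 0, (-σ) ^ e 1, (-σ) ^ e 2] i k := by
    have hinv : ∀ n : ℕ, (σ ^ n)⁻¹ = σ ^ n := fun n => by
      rw [← inv_pow, inv_eq_of_mul_eq_one_right hσσ]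
    have hneg : ∀ n : ℕ, (-1 : ℝ) ^ n = σ ^ n * (-σ) ^ n := fun n => by
      rw [← mul_pow, mul_neg, hσσ]
    ext i k
    fin_cases i <;> fin_cases k <;> simp [hrσ, mul_pow, hinv, hneg, mul_comm]
  have hunit : ∀ n : ℕ, |(-σ) ^ n| = 1 := fun n => by rw [abs_pow, abs_neg, hσ, one_pow]
  rw [hfactor, Matrix.det_mul_row]
  refine mul_ne_zero (Finset.prod_ne_zero_iff.mpr fun k _ => pow_ne_zero _ ?_) ?_
  · rintro rfl; simp at hσ
  · exact det_ne_zero_of_lt_of_abs_eq_one (pow_pos hs _)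
      (pow_lt_pow_right₀ hr (he Fin.zero_lt_one)) (pow_lt_pow_right₀ hr (he (by decide)))
      (hunit _) (hunit _) (hunit _)

theorem Polynomial.four_le_card_support_of_eval_eq_zero {p : ℂ[X]} (hp : p ≠ 0) {r : ℝ}
    (hr : 1 < |r|) (h₀ : p.eval (r : ℂ) = 0) (h₁ : p.eval ((r⁻¹ : ℝ) : ℂ) = 0)
    (h₂ : p.eval (-1) = 0) : 4 ≤ p.support.card := by
  by_contra! hcard
  obtain ⟨T, hpT, hT⟩ := Infinite.exists_superset_card_eq p.support 3 (by omega)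
  let e := T.orderEmbOfFin hT
  let z : Fin 3 → ℂ := ![(r : ℂ), ((r⁻¹ : ℝ) : ℂ), -1]
  have hmap : (Matrix.of fun i k => z i ^ e k)
      = Complex.ofRealHom.mapMatrix (Matrix.of fun i k => ![r, r⁻¹, -1] i ^ e k) := by
    ext i k
    fin_cases i <;> simp [z]
  refine hp (eq_zero_of_support_subset_of_det_ne_zero e.injective ?_ (z := z) ?_ ?_)
  · rw [Finset.range_orderEmbOfFin]; exact_mod_cast hpT
  · rw [hmap, ← RingHom.map_det, Complex.ofRealHom_eq_coe, Complex.ofReal_ne_zero]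
    exact det_pow_ne_zero_of_one_lt_abs hr e.strictMono
  · intro i
    fin_cases i <;> assumption

theorem Polynomial.ncard_setOf_coeff_ne_zero {R : Type*} [Semiring R] {p : R[X]} {m : ℕ}
    (hp : p.degree < m) : {i : Fin m | p.coeff i ≠ 0}.ncard = p.support.card := by
  have hrange : (p.support : Set ℕ) ⊆ Set.range (Fin.val : Fin m → ℕ) := fun k hk =>
    ⟨⟨k, by simpa using (le_degree_of_mem_supp k hk).trans_lt hp⟩, rfl⟩
  rw [← Set.ncard_coe_finset, ← Set.image_preimage_eq_of_subset hrange,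
    Set.ncard_image_of_injective _ Fin.val_injective]
  simp [Set.preimage]

theorem inv_sq_add_mul_add_one_eq_zero {K : Type*} [Field K] {b r : K}
    (h : r ^ 2 + b * r + 1 = 0) : r⁻¹ ^ 2 + b * r⁻¹ + 1 = 0 := by
  have hr : r ≠ 0 := by rintro rfl; simp at h
  field_simp
  linear_combination h

theorem exists_one_lt_abs_sq_add_mul_add_one_eq_zero {b : ℝ} (hb : 2 < |b|) :
    ∃ r : ℝ, 1 < |r| ∧ r ^ 2 + b * r + 1 = 0 := by
  have hdisc : discrim 1 b 1 = √(discrim 1 b 1) * √(discrim 1 b 1) := by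
    rw [Real.mul_self_sqrt (by rw [discrim]; nlinarith [sq_abs b])]
  obtain ⟨x, hx⟩ := exists_quadratic_eq_zero one_ne_zero ⟨_, hdisc⟩
  replace hx : x ^ 2 + b * x + 1 = 0 := by linear_combination hx
  have hx0 : x ≠ 0 := by rintro rfl; simp at hx
  have hx1 : |x| ≠ 1 := by
    intro h
    rcases abs_eq (zero_le_one' ℝ) |>.mp h with rfl | rfl
    · have : b = -2 := by linarith
      simp [this] at hb
    · have : b = 2 := by linarith
      simp [this] at hb
  rcases hx1.lt_or_gt with hlt | hgt
  · refine ⟨x⁻¹, ?_, inv_sq_add_mul_add_one_eq_zero hx⟩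
    rw [abs_inv]
    exact one_lt_inv₀ (abs_pos.mpr hx0) |>.mpr hlt
  · exact ⟨x, hgt, hx⟩

noncomputable def tentPoly {R : Type*} [Semiring R] (a : R) : R[X] :=
  X ^ 3 + C a * X ^ 2 + C a * X + 1

section tentPoly

variable {R : Type*}

theorem tentPoly_eval [CommRing R] (a x : R) :
    (tentPoly a).eval x = (x + 1) * (x ^ 2 + (a - 1) * x + 1) := by
  simp only [tentPoly, eval_add, eval_mul, eval_pow, eval_X, eval_C, eval_one]
  ring

theorem degree_tentPoly [Semiring R] [Nontrivial R] (a : R) : (tentPoly a).degree = 3 := by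
  unfold tentPoly; compute_degree!

theorem tentPoly_ne_zero [Semiring R] [Nontrivial R] (a : R) : tentPoly a ≠ 0 := fun h => by
  simpa [h] using degree_tentPoly a

theorem coeff_tentPoly [Semiring R] (a : R) (k : ℕ) :
    (tentPoly a).coeff k = if k = 0 ∨ k = 3 then 1 else if k = 1 ∨ k = 2 then a else 0 := by
  rcases k with _ | _ | _ | _ | k <;> simp [tentPoly, coeff_X_pow, coeff_C, coeff_one, coeff_X]

end tentPoly

theorem ofReal_Btmat_apply (n : ℕ) (a : ℝ) (i : Fin (n + 3)) (j : Fin n) :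
    (Btmat n a i j : ℂ) = (X ^ (j : ℕ) * tentPoly (a : ℂ)).coeff i := by
  rw [coeff_X_pow_mul', coeff_tentPoly]
  rcases i with ⟨i, hi⟩
  rcases j with ⟨j, hj⟩
  simp only [Btmat, Etent, Matrix.of_apply]
  split_ifs <;> first | rfl | omega

theorem sum_mul_ofReal_Btmat (n : ℕ) (a : ℝ) (lam : Fin n → ℂ) (i : Fin (n + 3)) :
    ∑ j, lam j * (Btmat n a i j : ℂ) = (ofFn n lam * tentPoly (a : ℂ)).coeff i := by
  simp_rw [ofReal_Btmat_apply, ofFn_eq_sum_monomial, Finset.sum_mul, finsetSum_coeff,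
    ← C_mul_X_pow_eq_monomial, mul_assoc, coeff_C_mul]

theorem ncard_setOf_sum_mul_ofReal_Btmat_ne_zero (n : ℕ) (a : ℝ) (lam : Fin n → ℂ) :
    {i : Fin (n + 3) | ∑ j, lam j * (Btmat n a i j : ℂ) ≠ 0}.ncard
      = (ofFn n lam * tentPoly (a : ℂ)).support.card := by
  simp_rw [sum_mul_ofReal_Btmat]
  refine ncard_setOf_coeff_ne_zero ?_
  rw [degree_mul, degree_tentPoly, Nat.cast_add]
  exact WithBot.add_lt_add_right (by decide) (ofFn_degree_lt lam)

theorem stmt14_general (a : ℝ) (ha : 5 < |a|) (n : ℕ) :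
    LinearIndependent ℂ
        (fun j : Fin n => fun i : Fin (n + 3) => ((Btmat n a i j : ℝ) : ℂ)) ∧
      ∀ lam : Fin n → ℂ,
        (fun i : Fin (n + 3) => ∑ j, lam j * ((Btmat n a i j : ℝ) : ℂ)) ≠ 0 →
        4 ≤ Set.ncard {i : Fin (n + 3) | ∑ j, lam j * ((Btmat n a i j : ℝ) : ℂ) ≠ 0} := by
  obtain ⟨r, hr, hroot⟩ := exists_one_lt_abs_sq_add_mul_add_one_eq_zero (b := a - 1) (by
    linarith [abs_sub_abs_le_abs_sub a 1, abs_one (α := ℝ)])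
  have hQ : ∀ x : ℝ, x ^ 2 + (a - 1) * x + 1 = 0 → (tentPoly (a : ℂ)).eval (x : ℂ) = 0 :=
    fun x hx => by rw [tentPoly_eval]; exact mul_eq_zero_of_right _ (by exact_mod_cast hx)
  have key : ∀ lam : Fin n → ℂ, lam ≠ 0 →
      4 ≤ {i : Fin (n + 3) | ∑ j, lam j * (Btmat n a i j : ℂ) ≠ 0}.ncard := by
    intro lam hlam
    rw [ncard_setOf_sum_mul_ofReal_Btmat_ne_zero]
    have hP : ofFn n lam * tentPoly (a : ℂ) ≠ 0 :=
      mul_ne_zero ((map_ne_zero_iff _ (injective_ofFn n)).mpr hlam) (tentPoly_ne_zero _)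
    refine four_le_card_support_of_eval_eq_zero hP hr ?_ ?_ ?_ <;> rw [eval_mul]
    · rw [hQ r hroot, mul_zero]
    · rw [hQ r⁻¹ (inv_sq_add_mul_add_one_eq_zero hroot), mul_zero]
    · rw [tentPoly_eval, neg_add_cancel, zero_mul, mul_zero]
  refine ⟨Fintype.linearIndependent_iff.mpr fun lam hlam => ?_, fun lam hne => key lam ?_⟩
  · by_contra! hlam'
    have h4 := key lam (Function.ne_iff.mpr hlam')
    have hzero : ∀ i, ∑ j, lam j * (Btmat n a i j : ℂ) = 0 := fun i => by
      simpa using congrFun hlam i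
    simp [hzero] at h4
  · rintro rfl
    exact hne (funext fun i => by simp)

theorem stmt14 (a : ℝ) (ha : 5 < |a|) (n : ℕ) (hn : 1 ≤ n) :
    LinearIndependent ℂ
        (fun j : Fin n => fun i : Fin (n + 3) => ((Btmat n a i j : ℝ) : ℂ)) ∧
      ∀ lam : Fin n → ℂ,
        (fun i : Fin (n + 3) => ∑ j, lam j * ((Btmat n a i j : ℝ) : ℂ)) ≠ 0 →
        4 ≤ Set.ncard {i : Fin (n + 3) | ∑ j, lam j * ((Btmat n a i j : ℝ) : ℂ) ≠ 0} :=
  stmt14_general a ha n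
end

section
/- Let m, n be natural numbers with m ≥ 4 and n ≥ 4, and let a be a real number with a = 3 or a > 5. Let 𝒮 ⊆ M_{m×n}(ℂ) be the complex linear span of the matrices S_{i,j}, for 2 ≤ i ≤ m−2 and 2 ≤ j ≤ n−2, where S_{i,j} is the m×n matrix whose only nonzero entries are: entry (i−2, j+1) equal to 1, entry (i−1, j) equal to −a, entry (i, j−1) equal to a, and entry (i+1, j−2) equal to −1 (rows indexed 0,…,m−1 and columns indexed 0,…,n−1). Then every nonzero matrix in 𝒮 has rank at least 4, and the dimension of 𝒮 over ℂ equals (m−3)(n−3). -/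
/-!
Read a matrix `M` as the polynomial `∑ M r c x^r y^c`. Then `S_{i+2,j+2}` is
`x^i y^j (y³ - a x y² + a x² y - x³)`, so the span consists of the products of this cubic
form with polynomials `C` of bidegree below `(m - 3, n - 3)`. If `k` is the top total degree
of `C ≠ 0` and `e(X) = ∑ₜ C_{t,k-t} Xᵗ`, the antidiagonal `r + c = k + 3` of `M` carries the
coefficients of `e(X)(1 - aX + aX² - X³)` and all entries beyond it vanish, so four nonzero
coefficients give a triangular `4 × 4` minor; in particular `M ≠ 0`, which is the linear
independence of the generators.

The cubic `1 - aX + aX² - X³ = (1 - X)(1 - (a - 1)X + X²)` has the positive roots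
`1, σ, σ⁻¹` (`σ = 1` for `a = 3`, counted three times). Pairing the coefficients of a multiple
of it with the solutions `1, r, r²` (for `a = 3`) or `σ⁻ʳ, 1, σʳ` (for `a > 3`) of the
associated linear recurrence gives zero, and if the multiple had at most three nonzero
coefficients this would be a nonsingular Vandermonde system.
-/

/-- The generator matrix `S_{i,j}` (rows indexed `0,…,m-1`, columns `0,…,n-1`):
its only nonzero entries are `(i-2, j+1) ↦ 1`, `(i-1, j) ↦ -a`, `(i, j-1) ↦ a`,
`(i+1, j-2) ↦ -1`. -/
def Sgen (m n : ℕ) (a : ℝ) (i j : ℕ) : Matrix (Fin m) (Fin n) ℂ :=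
  Matrix.of fun r c =>
    if (r : ℕ) = i - 2 ∧ (c : ℕ) = j + 1 then 1
    else if (r : ℕ) = i - 1 ∧ (c : ℕ) = j then -(a : ℂ)
    else if (r : ℕ) = i ∧ (c : ℕ) = j - 1 then (a : ℂ)
    else if (r : ℕ) = i + 1 ∧ (c : ℕ) = j - 2 then -1
    else 0

open Polynomial Finset

theorem Finset.eq_zero_of_forall_sum_mul_pow_eq_zero {R ι : Type*} [CommRing R] [IsDomain R]
    {s : Finset ι} {x g : ι → R} (hx : Set.InjOn x s)
    (h : ∀ k < #s, ∑ i ∈ s, g i * x i ^ k = 0) : ∀ i ∈ s, g i = 0 := by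
  intro i hi
  have := Matrix.eq_zero_of_forall_pow_sum_mul_pow_eq_zero (f := fun j => x (s.equivFin.symm j))
    (v := fun j => g (s.equivFin.symm j)) ?_ ?_
  · simpa using congrFun this (s.equivFin ⟨i, hi⟩)
  · intro j j' hjj'
    exact s.equivFin.symm.injective
      (Subtype.ext (hx (s.equivFin.symm j).2 (s.equivFin.symm j').2 hjj'))
  · intro k
    rw [← h k k.2, ← s.sum_coe_sort]
    exact Fintype.sum_equiv s.equivFin.symm _ _ fun _ => rfl

theorem Polynomial.map_mul_eq_zero_of_forall_X_pow_mul {R M : Type*} [CommSemiring R]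
    [AddCommMonoid M] [Module R M] {φ : R[X] →ₗ[R] M} {K : R[X]}
    (h : ∀ t, φ (X ^ t * K) = 0) (E : R[X]) : φ (E * K) = 0 := by
  induction E using Polynomial.induction_on' with
  | add p q hp hq => rw [add_mul, map_add, hp, hq, add_zero]
  | monomial t e => rw [← C_mul_X_pow_eq_monomial, mul_assoc, C_mul', map_smul, h, smul_zero]

noncomputable def sgenPoly (a : ℝ) : ℂ[X] := 1 - C (a : ℂ) * X + C (a : ℂ) * X ^ 2 - X ^ 3

theorem sgenPoly_ne_zero (a : ℝ) : sgenPoly a ≠ 0 := by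
  intro h
  simpa [sgenPoly] using congrArg (coeff · 0) h

theorem sum_coeff_mul_sgenPoly_mul_eq_zero_of_recurrence {a : ℝ} {w : ℕ → ℂ}
    (hw : ∀ t, w t - a * w (t + 1) + a * w (t + 2) - w (t + 3) = 0) (E : ℂ[X]) :
    ∑ r ∈ (E * sgenPoly a).support, (E * sgenPoly a).coeff r * w r = 0 := by
  have := map_mul_eq_zero_of_forall_X_pow_mul (φ := lsum fun r => LinearMap.mulLeft ℂ (w r))
    (K := sgenPoly a) ?_ E
  · simpa [sum_def, mul_comm] using this
  · intro t
    have hexpand : X ^ t * sgenPoly a =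
        X ^ t - C (a : ℂ) * X ^ (t + 1) + C (a : ℂ) * X ^ (t + 2) - X ^ (t + 3) := by
      simp only [sgenPoly]; ring
    have hmon : ∀ j c, (lsum fun r => LinearMap.mulLeft ℂ (w r)) (monomial j c) = w j * c :=
      fun j c => by simp [sum_monomial_index]
    rw [hexpand, map_sub, map_add, map_sub, C_mul_X_pow_eq_monomial, C_mul_X_pow_eq_monomial,
      X_pow_eq_monomial, X_pow_eq_monomial, hmon, hmon, hmon, hmon, ← hw t]
    ring

theorem exists_root_quadratic_of_three_lt {a : ℝ} (ha : 3 < a) :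
    ∃ σ : ℝ, 0 < σ ∧ σ < 1 ∧ σ ^ 2 - (a - 1) * σ + 1 = 0 := by
  have hd : 0 ≤ (a - 1) ^ 2 - 4 := by nlinarith
  have hsq := Real.sq_sqrt hd
  have hlt : √((a - 1) ^ 2 - 4) < a - 1 := by nlinarith [Real.sqrt_nonneg ((a - 1) ^ 2 - 4)]
  have hgt : a - 3 < √((a - 1) ^ 2 - 4) := by nlinarith [Real.sqrt_nonneg ((a - 1) ^ 2 - 4)]
  exact ⟨(a - 1 - √((a - 1) ^ 2 - 4)) / 2, by linarith, by linarith, by nlinarith⟩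

theorem sgen_recurrence_pow {a : ℝ} {μ : ℂ} (hμ : μ = 1 ∨ μ ^ 2 - (a - 1) * μ + 1 = 0)
    (t : ℕ) :
    μ ^ t - a * μ ^ (t + 1) + a * μ ^ (t + 2) - μ ^ (t + 3) = 0 := by
  rcases hμ with rfl | hμ
  · simp
  · linear_combination (μ ^ t * (1 - μ)) * hμ

theorem exists_sgen_weights {a : ℝ} (ha : 3 ≤ a) :
    ∃ x y : ℕ → ℂ, Function.Injective x ∧ (∀ r, y r ≠ 0) ∧ ∀ k < 3, ∀ t,
      y t * x t ^ k - a * (y (t + 1) * x (t + 1) ^ k) + a * (y (t + 2) * x (t + 2) ^ k)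
        - y (t + 3) * x (t + 3) ^ k = 0 := by
  rcases ha.eq_or_lt with rfl | ha
  · refine ⟨Nat.cast, fun _ => 1, Nat.cast_injective, fun _ => one_ne_zero, fun k hk t => ?_⟩
    interval_cases k <;> push_cast <;> ring
  · obtain ⟨σ, hσ0, hσ1, hσ⟩ := exists_root_quadratic_of_three_lt ha
    have hσC : (σ : ℂ) ^ 2 - (a - 1) * σ + 1 = 0 := by
      exact_mod_cast congrArg Complex.ofReal hσ
    have hσne : (σ : ℂ) ≠ 0 := by exact_mod_cast hσ0.ne'
    refine ⟨fun r => (σ : ℂ) ^ r, fun r => (σ : ℂ)⁻¹ ^ r, ?_, fun r => by simp [hσne],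
      fun k hk t => ?_⟩
    · intro r s hrs
      have : ((σ ^ r : ℝ) : ℂ) = ((σ ^ s : ℝ) : ℂ) := by simpa using hrs
      exact pow_right_injective₀ hσ0 hσ1.ne (Complex.ofReal_injective this)
    · have hroot : (σ : ℂ)⁻¹ * σ ^ k = 1 ∨
          ((σ : ℂ)⁻¹ * σ ^ k) ^ 2 - (a - 1) * ((σ : ℂ)⁻¹ * σ ^ k) + 1 = 0 := by
        interval_cases k
        · right; field_simp; linear_combination hσC
        · left; field_simp
        · right; field_simp; linear_combination hσC
      have hgeom :
          ∀ r, (σ : ℂ)⁻¹ ^ r * ((σ : ℂ) ^ r) ^ k = ((σ : ℂ)⁻¹ * σ ^ k) ^ r := by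
        intro r
        rw [mul_pow, ← pow_mul, ← pow_mul, mul_comm r k]
      simpa only [hgeom] using sgen_recurrence_pow hroot t

theorem four_le_card_support_mul_sgenPoly {a : ℝ} (ha : 3 ≤ a) {E : ℂ[X]} (hE : E ≠ 0) :
    4 ≤ #(E * sgenPoly a).support := by
  obtain ⟨x, y, hx, hy, hxy⟩ := exists_sgen_weights ha
  obtain ⟨r, hr⟩ := support_nonempty.mpr (mul_ne_zero hE (sgenPoly_ne_zero a))
  by_contra! hcard
  have hvanish := Finset.eq_zero_of_forall_sum_mul_pow_eq_zero hx.injOn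
    (g := fun r => (E * sgenPoly a).coeff r * y r) fun k hk => by
      simpa only [mul_assoc] using
        sum_coeff_mul_sgenPoly_mul_eq_zero_of_recurrence (hxy k (by omega)) E
  exact mem_support_iff.mp hr ((mul_eq_zero.mp (hvanish r hr)).resolve_right (hy r))

theorem Matrix.card_le_rank_of_isUpperTriangular_submatrix {R m n d : Type*} [CommRing R]
    [IsDomain R] [Fintype n] [Fintype d] [LinearOrder d] {A : Matrix m n R} {r : d → m}
    {c : d → n} (htri : (A.submatrix r c).IsUpperTriangular)
    (hdiag : ∀ i, A (r i) (c i) ≠ 0) :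
    Fintype.card d ≤ A.rank := by
  have hdet : (A.submatrix r c).det ≠ 0 := by
    rw [Matrix.det_of_isUpperTriangular htri]
    exact prod_ne_zero_iff.mpr fun i _ => hdiag i
  calc Fintype.card d = (A.submatrix r c).rank := (Matrix.rank_of_det_ne_zero hdet).symm
    _ ≤ A.rank := A.rank_submatrix_le r c

theorem coeff_X_pow_mul_sgenPoly (a : ℝ) (i r : ℕ) :
    (X ^ i * sgenPoly a).coeff r =
      if r = i then 1 else if r = i + 1 then -(a : ℂ) else if r = i + 2 then (a : ℂ)
      else if r = i + 3 then -1 else 0 := by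
  simp only [sgenPoly, coeff_X_pow_mul', coeff_sub, coeff_add, coeff_one, coeff_C_mul, coeff_X,
    coeff_X_pow]
  split_ifs <;> first | omega | simp

theorem le_and_le_add_three_of_coeff_X_pow_mul_sgenPoly_ne_zero {a : ℝ} {i r : ℕ}
    (h : (X ^ i * sgenPoly a).coeff r ≠ 0) : i ≤ r ∧ r ≤ i + 3 := by
  rw [coeff_X_pow_mul_sgenPoly] at h
  split_ifs at h <;> first | omega | exact absurd rfl h

theorem Sgen_add_two_apply (m n : ℕ) (a : ℝ) (i j : ℕ) (r : Fin m) (c : Fin n) :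
    Sgen m n a (i + 2) (j + 2) r c =
      if (r : ℕ) + c = i + j + 3 then (X ^ i * sgenPoly a).coeff r else 0 := by
  simp only [Sgen, Matrix.of_apply, coeff_X_pow_mul_sgenPoly]
  split_ifs <;> first | omega | rfl

noncomputable def antidiagPoly {p q : ℕ} (c : Fin p × Fin q → ℂ) (k : ℕ) : ℂ[X] :=
  ∑ x, if (x.1 : ℕ) + x.2 = k then monomial x.1 (c x) else 0

theorem coeff_antidiagPoly_mul_sgenPoly {p q : ℕ} (c : Fin p × Fin q → ℂ) (k : ℕ) (a : ℝ)
    (r : ℕ) : (antidiagPoly c k * sgenPoly a).coeff r =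
      ∑ x, if (x.1 : ℕ) + x.2 = k then c x * (X ^ (x.1 : ℕ) * sgenPoly a).coeff r else 0 := by
  simp only [antidiagPoly, Finset.sum_mul, finsetSum_coeff]
  refine sum_congr rfl fun x _ => ?_
  split_ifs
  · rw [← C_mul_X_pow_eq_monomial, mul_assoc, coeff_C_mul]
  · simp

theorem antidiagPoly_ne_zero {p q : ℕ} {c : Fin p × Fin q → ℂ} {x₀ : Fin p × Fin q}
    (hx₀ : c x₀ ≠ 0) : antidiagPoly c (x₀.1 + x₀.2) ≠ 0 := by
  refine fun h => hx₀ ?_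
  have := congrArg (coeff · x₀.1) h
  simp only [antidiagPoly, finsetSum_coeff, coeff_zero, apply_ite (coeff · (x₀.1 : ℕ)),
    coeff_monomial] at this
  rwa [sum_eq_single x₀ (fun x _ hx => ?_) (by simp), if_pos rfl, if_pos rfl] at this
  split_ifs with h₁ h₂ <;> try rfl
  exact absurd (Prod.ext (Fin.ext h₂) (Fin.ext (by omega))) hx

section

variable {m n : ℕ} {a : ℝ} (c : Fin (m - 3) × Fin (n - 3) → ℂ)

theorem sum_smul_Sgen_apply (r : Fin m) (col : Fin n) :
    (∑ x, c x • Sgen m n a (x.1 + 2) (x.2 + 2)) r col =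
      ∑ x, if (r : ℕ) + col = x.1 + x.2 + 3 then c x * (X ^ (x.1 : ℕ) * sgenPoly a).coeff r
        else 0 := by
  simp only [Matrix.sum_apply, Matrix.smul_apply, Sgen_add_two_apply, smul_eq_mul, mul_ite,
    mul_zero]

theorem sum_smul_Sgen_apply_of_add_eq {k : ℕ} {r : Fin m} {col : Fin n}
    (h : (r : ℕ) + col = k + 3) :
    (∑ x, c x • Sgen m n a (x.1 + 2) (x.2 + 2)) r col =
      (antidiagPoly c k * sgenPoly a).coeff r := by
  rw [sum_smul_Sgen_apply, coeff_antidiagPoly_mul_sgenPoly]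
  exact sum_congr rfl fun x _ => if_congr (by omega) rfl rfl

theorem sum_smul_Sgen_apply_eq_zero {k : ℕ} (hk : ∀ x, c x ≠ 0 → (x.1 : ℕ) + x.2 ≤ k)
    {r : Fin m} {col : Fin n} (h : k + 3 < (r : ℕ) + col) :
    (∑ x, c x • Sgen m n a (x.1 + 2) (x.2 + 2)) r col = 0 := by
  rw [sum_smul_Sgen_apply]
  refine sum_eq_zero fun x _ => ?_
  by_cases hx : c x = 0
  · simp [hx]
  · exact if_neg (by have := hk x hx; omega)

theorem four_le_rank_sum_smul_Sgen (ha : 3 ≤ a) (hc : c ≠ 0) :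
    4 ≤ (∑ x, c x • Sgen m n a (x.1 + 2) (x.2 + 2)).rank := by
  obtain ⟨x₀, hx₀, hmax⟩ :=
    (univ.filter (c · ≠ 0)).exists_max_image (fun x => (x.1 : ℕ) + x.2) <| by
      obtain ⟨x, hx⟩ := Function.ne_iff.mp hc
      exact ⟨x, by simpa using hx⟩
  set k := (x₀.1 : ℕ) + x₀.2
  have hk : ∀ x, c x ≠ 0 → (x.1 : ℕ) + x.2 ≤ k := fun x hx => hmax x (by simpa using hx)
  set S := (antidiagPoly c k * sgenPoly a).support
  have hS : 4 ≤ #S :=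
    four_le_card_support_mul_sgenPoly ha (antidiagPoly_ne_zero (by simpa using hx₀))
  let ρ : Fin 4 → ℕ := fun i => S.orderEmbOfFin rfl (Fin.castLE hS i)
  have hρS : ∀ i, ρ i ∈ S := fun i => S.orderEmbOfFin_mem rfl _
  have hρ : StrictMono ρ := (S.orderEmbOfFin rfl).strictMono.comp (Fin.strictMono_castLE hS)
  have hbound : ∀ i, ρ i < m ∧ ρ i ≤ k + 3 ∧ k + 3 - ρ i < n := by
    intro i
    have hmem := hρS i
    rw [mem_support_iff, coeff_antidiagPoly_mul_sgenPoly] at hmem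
    obtain ⟨x, -, hx⟩ := exists_ne_zero_of_sum_ne_zero hmem
    have hxk : (x.1 : ℕ) + x.2 = k := by_contra fun h => hx (if_neg h)
    rw [if_pos hxk] at hx
    have := le_and_le_add_three_of_coeff_X_pow_mul_sgenPoly_ne_zero (right_ne_zero_of_mul hx)
    have := x.1.isLt
    have := x.2.isLt
    omega
  have := Matrix.card_le_rank_of_isUpperTriangular_submatrix
    (A := ∑ x, c x • Sgen m n a (x.1 + 2) (x.2 + 2))
    (r := fun i => (⟨ρ i, (hbound i).1⟩ : Fin m))
    (c := fun i => (⟨k + 3 - ρ i, (hbound i).2.2⟩ : Fin n)) ?_ ?_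
  · simpa using this
  · intro i j hij
    have := hρ (show j < i from hij)
    have := (hbound j).2.1
    exact sum_smul_Sgen_apply_eq_zero c hk (by simp only; omega)
  · intro i
    have := (hbound i).2.1
    rw [sum_smul_Sgen_apply_of_add_eq c (k := k) (by simp only; omega)]
    exact mem_support_iff.mp (hρS i)

end

theorem linearIndependent_Sgen {m n : ℕ} {a : ℝ} (ha : 3 ≤ a) :
    LinearIndependent ℂ
      fun x : Fin (m - 3) × Fin (n - 3) => Sgen m n a (x.1 + 2) (x.2 + 2) := by
  refine Fintype.linearIndependent_iff.mpr fun c hc x => by_contra fun hx => ?_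
  have := four_le_rank_sum_smul_Sgen c ha (fun h => hx (congrFun h x))
  rw [hc, Matrix.rank_zero] at this
  omega

theorem setOf_Sgen_eq_range (m n : ℕ) (a : ℝ) :
    {M : Matrix (Fin m) (Fin n) ℂ |
        ∃ i j : ℕ, 2 ≤ i ∧ i ≤ m - 2 ∧ 2 ≤ j ∧ j ≤ n - 2 ∧ M = Sgen m n a i j} =
      Set.range fun x : Fin (m - 3) × Fin (n - 3) => Sgen m n a (x.1 + 2) (x.2 + 2) := by
  ext M
  constructor
  · rintro ⟨i, j, hi, him, hj, hjn, rfl⟩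
    refine ⟨(⟨i - 2, by omega⟩, ⟨j - 2, by omega⟩), ?_⟩
    simp only [Nat.sub_add_cancel hi, Nat.sub_add_cancel hj]
  · rintro ⟨x, rfl⟩
    exact ⟨x.1 + 2, x.2 + 2, by omega, by omega, by omega, by omega, rfl⟩

theorem stmt15_general (m n : ℕ) (a : ℝ) (ha : a = 3 ∨ 5 < a) :
    (∀ M ∈ Submodule.span ℂ {M : Matrix (Fin m) (Fin n) ℂ |
        ∃ i j : ℕ, 2 ≤ i ∧ i ≤ m - 2 ∧ 2 ≤ j ∧ j ≤ n - 2 ∧ M = Sgen m n a i j},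
      M ≠ 0 → 4 ≤ M.rank) ∧
    Module.finrank ℂ (Submodule.span ℂ {M : Matrix (Fin m) (Fin n) ℂ |
        ∃ i j : ℕ, 2 ≤ i ∧ i ≤ m - 2 ∧ 2 ≤ j ∧ j ≤ n - 2 ∧ M = Sgen m n a i j}) =
      (m - 3) * (n - 3) := by
  have ha₃ : 3 ≤ a := by rcases ha with rfl | ha <;> linarith
  rw [setOf_Sgen_eq_range]
  refine ⟨fun M hM hM0 => ?_, by simp [finrank_span_eq_card (linearIndependent_Sgen ha₃)]⟩
  obtain ⟨c, rfl⟩ := (Submodule.mem_span_range_iff_exists_fun ℂ).mp hM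
  exact four_le_rank_sum_smul_Sgen c ha₃ (by rintro rfl; simp at hM0)

theorem stmt15 (m n : ℕ) (hm : 4 ≤ m) (hn : 4 ≤ n) (a : ℝ) (ha : a = 3 ∨ 5 < a) :
    (∀ M ∈ Submodule.span ℂ {M : Matrix (Fin m) (Fin n) ℂ |
        ∃ i j : ℕ, 2 ≤ i ∧ i ≤ m - 2 ∧ 2 ≤ j ∧ j ≤ n - 2 ∧ M = Sgen m n a i j},
      M ≠ 0 → 4 ≤ M.rank) ∧
    Module.finrank ℂ (Submodule.span ℂ {M : Matrix (Fin m) (Fin n) ℂ |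
        ∃ i j : ℕ, 2 ≤ i ∧ i ≤ m - 2 ∧ 2 ≤ j ∧ j ≤ n - 2 ∧ M = Sgen m n a i j}) =
      (m - 3) * (n - 3) :=
  stmt15_general m n a ha
end

section
/- Let m, n be natural numbers with m ≥ 4 and n ≥ 4, and let a be a real number with a > 4. Let 𝒯 ⊆ M_{m×n}(ℂ) be the complex linear span of the matrices T_{i,j}, for 2 ≤ i ≤ m−2 and 2 ≤ j ≤ n−2, where T_{i,j} is the m×n matrix whose only nonzero entries are: entry (i−2, j+1) equal to 1, entry (i−1, j) equal to a+1, entry (i, j−1) equal to a+1, and entry (i+1, j−2) equal to 1 (rows indexed 0,…,m−1, columns indexed 0,…,n−1). Then every nonzero matrix in 𝒯 has rank at least 4, and the dimension of 𝒯 over ℂ equals (m−3)(n−3). -/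
/-!
Write `Q = 1 + (a+1) X + (a+1) X² + X³ = (1 + X)(1 + a X + X²)`. Indexed by `(i, j) ↦ T_{i+2,j+2}`,
the generator `(i, j)` lives on the antidiagonal `r + c = i + j + 3`, where, from the top row down,
it carries the coefficients of `X^i · Q`. So if `σ` is the least `i + j` on the support of a
nonzero combination `M = ∑ l_{ij} T_{i+2,j+2}`, the entries of `M` with `r + c < σ + 3` vanish and
those with `r + c = σ + 3` are the coefficients of `P · Q`, where `P = ∑_{i+j=σ} l_{ij} X^i ≠ 0`.
For `a > 2`, `Q` has the three distinct negative roots `-1` and `(-a ± √(a² - 4))/2`, so by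
Descartes' rule of signs (applied to the real part of a suitable scalar multiple) `P · Q` has at
least four nonzero coefficients. Four nonzero entries on the first nonzero antidiagonal of `M`
span a triangular `4 × 4` minor with nonzero diagonal, so `rank M ≥ 4`; in particular the
generators are linearly independent.
-/

/-- The generator matrix `T_{i,j}` (rows indexed `0,…,m-1`, columns `0,…,n-1`):
its only nonzero entries are `(i-2, j+1) ↦ 1`, `(i-1, j) ↦ a+1`, `(i, j-1) ↦ a+1`,
`(i+1, j-2) ↦ 1`. -/
def Tgen (m n : ℕ) (a : ℝ) (i j : ℕ) : Matrix (Fin m) (Fin n) ℂ :=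
  Matrix.of fun r c =>
    if (r : ℕ) = i - 2 ∧ (c : ℕ) = j + 1 then 1
    else if (r : ℕ) = i - 1 ∧ (c : ℕ) = j then (a : ℂ) + 1
    else if (r : ℕ) = i ∧ (c : ℕ) = j - 1 then (a : ℂ) + 1
    else if (r : ℕ) = i + 1 ∧ (c : ℕ) = j - 2 then 1
    else 0

open Polynomial Finset

namespace Polynomial

theorem signVariations_lt_card_support {R : Type*} [Semiring R] [LinearOrder R] {P : R[X]}
    (hP : P ≠ 0) : P.signVariations < #P.support := by
  induction hk : #P.support generalizing P with
  | zero => exact absurd (card_support_eq_zero.mp hk) hP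
  | succ k ih =>
    by_cases hE : P.eraseLead = 0
    · rw [← eraseLead_add_monomial_natDegree_leadingCoeff P, hE, zero_add,
        signVariations_monomial]
      omega
    · have := ih hE (by rw [card_support_eraseLead, hk, Nat.add_sub_cancel])
      have := signVariations_le_eraseLead_succ P
      omega

theorem coeff_comp_neg_X {R : Type*} [CommRing R] (p : R[X]) (k : ℕ) :
    (p.comp (-X)).coeff k = (-1) ^ k * p.coeff k := by
  induction p using Polynomial.induction_on' with
  | add p q hp hq => simp [add_comp, hp, hq, mul_add]
  | monomial e c =>
    rw [← C_mul_X_pow_eq_monomial, mul_comp, C_comp, X_pow_comp, neg_pow,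
      show ((-1 : R[X]) ^ e) = C ((-1) ^ e) by simp, ← mul_assoc, ← C_mul]
    simp only [coeff_C_mul, coeff_X_pow]
    split_ifs with h <;> simp [h, mul_comm]

theorem support_comp_neg_X {R : Type*} [CommRing R] (p : R[X]) :
    (p.comp (-X)).support = p.support := by
  ext k
  simp [coeff_comp_neg_X]

section OrderedRing

variable {R : Type*} [CommRing R] [LinearOrder R] [IsStrictOrderedRing R]

theorem card_lt_card_support_of_forall_pos_isRoot {P : R[X]} (hP : P ≠ 0) {s : Finset R}
    (hs : ∀ x ∈ s, 0 < x ∧ P.IsRoot x) : #s < #P.support := by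
  classical
  have hsub : s ⊆ (P.roots.filter (0 < ·)).toFinset := fun x hx => by
    simpa [mem_roots hP] using (hs x hx).symm
  calc #s ≤ P.roots.countP (0 < ·) := by
        rw [Multiset.countP_eq_card_filter]
        exact (card_le_card hsub).trans (Multiset.toFinset_card_le _)
    _ ≤ P.signVariations := roots_countP_pos_le_signVariations P
    _ < #P.support := signVariations_lt_card_support hP

theorem card_lt_card_support_of_forall_neg_isRoot {P : R[X]} (hP : P ≠ 0) {s : Finset R}
    (hs : ∀ x ∈ s, x < 0 ∧ P.IsRoot x) : #s < #P.support := by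
  rw [← support_comp_neg_X, ← card_map (Equiv.neg R).toEmbedding]
  refine card_lt_card_support_of_forall_pos_isRoot (by simpa [comp_neg_X_eq_zero_iff]) ?_
  simp only [mem_map_equiv, Equiv.neg_symm, Equiv.neg_apply]
  intro x hx
  simpa [IsRoot] using hs (-x) hx

end OrderedRing

noncomputable def rePart (F : ℂ[X]) : ℝ[X] :=
  ∑ k ∈ F.support, monomial k (F.coeff k).re

@[simp]
theorem coeff_rePart (F : ℂ[X]) (k : ℕ) : (rePart F).coeff k = (F.coeff k).re := by
  simp only [rePart, finsetSum_coeff, coeff_monomial, sum_ite_eq', mem_support_iff]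
  split_ifs with h
  · rfl
  · simp [not_not.mp h]

theorem eval_rePart (F : ℂ[X]) (x : ℝ) : (rePart F).eval x = (F.eval (x : ℂ)).re := by
  rw [rePart, eval_finsetSum, eval_eq_sum, sum_def, Complex.re_sum]
  refine sum_congr rfl fun k _ => ?_
  simp [← Complex.ofReal_pow]

theorem card_lt_card_support_of_forall_neg_real_isRoot {F : ℂ[X]} (hF : F ≠ 0)
    {s : Finset ℝ} (hs : ∀ x ∈ s, x < 0 ∧ F.IsRoot x) : #s < #F.support := by
  obtain ⟨k, hk⟩ : ∃ k, F.coeff k ≠ 0 := by simpa [Polynomial.ext_iff] using hF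
  -- normalising one coefficient to `1` makes the real part a nonzero polynomial
  set G := rePart (C (F.coeff k)⁻¹ * F)
  have hG : G ≠ 0 := fun h => by simpa [G, hk] using congr_arg (coeff · k) h
  have hGF : G.support ⊆ F.support := fun e => by
    simp only [mem_support_iff]
    contrapose!
    simp_all [G]
  refine (card_lt_card_support_of_forall_neg_isRoot hG fun x hx => ⟨(hs x hx).1, ?_⟩).trans_le
    (card_le_card hGF)
  simp [G, IsRoot, eval_rePart, (hs x hx).2.eq_zero]

end Polynomial

theorem Matrix.card_le_rank_of_antidiagonal {K : Type*} [Field K] {m n : ℕ}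
    (A : Matrix (Fin m) (Fin n) K) (s : ℕ)
    (hA : ∀ (r : Fin m) (c : Fin n), (r : ℕ) + c < s → A r c = 0) {R : Finset (Fin m)}
    (hR : ∀ r ∈ R, ∃ c : Fin n, (r : ℕ) + c = s ∧ A r c ≠ 0) :
    #R ≤ A.rank := by
  obtain ⟨row, hrow⟩ : ∃ row : Fin #R ↪o Fin m, ∀ k, row k ∈ R :=
    ⟨_, R.orderEmbOfFin_mem rfl⟩
  choose col hcol using fun k => hR _ (hrow k)
  have hB : (A.submatrix row col).IsLowerTriangular := fun k k' (hkk' : k < k') => by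
    have := row.strictMono hkk'
    have := (hcol k').1
    exact hA _ _ (by omega)
  calc #R = (A.submatrix row col * 1).rank := by
        rw [Matrix.rank_mul_eq_right_of_isLowerTriangular _ 1 hB fun k => (hcol k).2,
          Matrix.rank_one, Fintype.card_fin]
    _ ≤ A.rank := by
        rw [Matrix.mul_one]
        exact Matrix.rank_submatrix_le A row col

noncomputable def Tpoly (a : ℝ) : ℂ[X] :=
  1 + C ((a : ℂ) + 1) * X + C ((a : ℂ) + 1) * X ^ 2 + X ^ 3

theorem coeff_Tpoly (a : ℝ) (k : ℕ) :
    (Tpoly a).coeff k =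
      if k = 0 ∨ k = 3 then 1 else if k = 1 ∨ k = 2 then (a : ℂ) + 1 else 0 := by
  simp only [Tpoly, coeff_add, coeff_one, coeff_C_mul_X, coeff_C_mul_X_pow, coeff_X_pow]
  split_ifs <;> first | omega | simp

theorem Tpoly_ne_zero (a : ℝ) : Tpoly a ≠ 0 := fun h => by
  simpa [coeff_Tpoly] using congr_arg (coeff · 3) h

theorem eval_Tpoly (a u : ℝ) :
    (Tpoly a).eval (u : ℂ) = ((1 + u) * (u ^ 2 + a * u + 1) : ℝ) := by
  simp [Tpoly]
  ring

theorem four_le_card_support_mul_Tpoly {a : ℝ} (ha : 2 < a) {P : ℂ[X]} (hP : P ≠ 0) :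
    4 ≤ #(P * Tpoly a).support := by
  set d := √(a ^ 2 - 4)
  have hd : d ^ 2 = a ^ 2 - 4 := Real.sq_sqrt (by nlinarith)
  have hd0 : 0 < d := Real.sqrt_pos.mpr (by nlinarith)
  have hda : d < a := by nlinarith
  set s : Finset ℝ := {(-a - d) / 2, -1, (-a + d) / 2}
  have hs : #s = 3 := card_eq_three.mpr ⟨_, _, _, by nlinarith, by linarith, by nlinarith, rfl⟩
  have hroots : ∀ u ∈ s, u < 0 ∧ (1 + u) * (u ^ 2 + a * u + 1) = 0 := by
    simp only [s, mem_insert, mem_singleton]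
    rintro u (rfl | rfl | rfl)
    · exact ⟨by linarith, by linear_combination (2 - a - d) / 8 * hd⟩
    · norm_num
    · exact ⟨by linarith, by linear_combination (2 - a + d) / 8 * hd⟩
  have := card_lt_card_support_of_forall_neg_real_isRoot (mul_ne_zero hP (Tpoly_ne_zero a))
    fun u hu => ⟨(hroots u hu).1, by simp [eval_Tpoly, (hroots u hu).2]⟩
  omega

-- Shifting the indices keeps truncated subtraction out of the index set.
def shiftedTgen (m n : ℕ) (a : ℝ) (p : ℕ × ℕ) : Matrix (Fin m) (Fin n) ℂ :=
  Tgen m n a (p.1 + 2) (p.2 + 2)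

theorem shiftedTgen_apply {m n : ℕ} (a : ℝ) (p : ℕ × ℕ) (r : Fin m) (c : Fin n) :
    shiftedTgen m n a p r c =
      if (r : ℕ) + c = p.1 + p.2 + 3 ∧ p.1 ≤ r then (Tpoly a).coeff (r - p.1) else 0 := by
  simp only [shiftedTgen, Tgen, Matrix.of_apply, coeff_Tpoly]
  split_ifs <;> first | omega | rfl

theorem setOf_Tgen_eq_image_shiftedTgen (m n : ℕ) (a : ℝ) :
    {M : Matrix (Fin m) (Fin n) ℂ |
        ∃ i j : ℕ, 2 ≤ i ∧ i ≤ m - 2 ∧ 2 ≤ j ∧ j ≤ n - 2 ∧ M = Tgen m n a i j} =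
      shiftedTgen m n a '' ↑(range (m - 3) ×ˢ range (n - 3)) := by
  ext M
  simp only [Set.mem_ofPred_eq, Set.mem_image, coe_product, coe_range, Set.mem_prod,
    Set.mem_Iio, Prod.exists, shiftedTgen]
  constructor
  · rintro ⟨i, j, hi, hi', hj, hj', rfl⟩
    exact ⟨i - 2, j - 2, ⟨by omega, by omega⟩, by rw [Nat.sub_add_cancel hi, Nat.sub_add_cancel hj]⟩
  · rintro ⟨i, j, ⟨hi, hj⟩, rfl⟩
    exact ⟨i + 2, j + 2, by omega, by omega, by omega, by omega, rfl⟩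

noncomputable def antidiagonalPoly (l : ℕ × ℕ →₀ ℂ) (σ : ℕ) : ℂ[X] :=
  ∑ p ∈ l.support with p.1 + p.2 = σ, C (l p) * X ^ p.1

theorem antidiagonalPoly_ne_zero {l : ℕ × ℕ →₀ ℂ} {p : ℕ × ℕ} (hp : p ∈ l.support) :
    antidiagonalPoly l (p.1 + p.2) ≠ 0 := fun h => by
  have : (antidiagonalPoly l (p.1 + p.2)).coeff p.1 = l p := by
    rw [antidiagonalPoly, finsetSum_coeff, sum_eq_single p]
    · simp
    · intro q hq hqp
      simp only [mem_filter] at hq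
      rw [coeff_C_mul_X_pow, if_neg]
      contrapose! hqp
      exact Prod.ext hqp.symm (by omega)
    · simp [hp]
  simp_all

theorem coeff_antidiagonalPoly_mul (l : ℕ × ℕ →₀ ℂ) (σ : ℕ) (Q : ℂ[X]) (k : ℕ) :
    (antidiagonalPoly l σ * Q).coeff k =
      ∑ p ∈ l.support with p.1 + p.2 = σ, l p * if p.1 ≤ k then Q.coeff (k - p.1) else 0 := by
  simp only [antidiagonalPoly, sum_mul, finsetSum_coeff, mul_assoc, coeff_C_mul, coeff_X_pow_mul']

theorem exists_of_mem_support_antidiagonalPoly_mul_Tpoly {l : ℕ × ℕ →₀ ℂ} {σ e : ℕ} {a : ℝ}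
    (he : e ∈ (antidiagonalPoly l σ * Tpoly a).support) :
    ∃ p ∈ l.support, p.1 + p.2 = σ ∧ p.1 ≤ e ∧ e ≤ p.1 + 3 := by
  rw [mem_support_iff, coeff_antidiagonalPoly_mul] at he
  obtain ⟨p, hp, hpe⟩ := exists_ne_zero_of_sum_ne_zero he
  rw [mem_filter] at hp
  refine ⟨p, hp.1, hp.2, ?_⟩
  split_ifs at hpe with h
  · refine ⟨h, ?_⟩
    by_contra! h3
    rw [coeff_Tpoly, if_neg (by omega), if_neg (by omega), mul_zero] at hpe
    exact hpe rfl
  · exact absurd (mul_zero _) hpe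

section linearCombination

variable {m n : ℕ} {a : ℝ} (l : ℕ × ℕ →₀ ℂ) (r : Fin m) (c : Fin n)

theorem linearCombination_shiftedTgen_apply :
    Finsupp.linearCombination ℂ (shiftedTgen m n a) l r c =
      ∑ p ∈ l.support, l p * shiftedTgen m n a p r c := by
  simp [Finsupp.linearCombination_apply, Finsupp.sum, Matrix.sum_apply]

theorem linearCombination_shiftedTgen_apply_of_lt {σ : ℕ} (hσ : ∀ p ∈ l.support, σ ≤ p.1 + p.2)
    (h : (r : ℕ) + c < σ + 3) :
    Finsupp.linearCombination ℂ (shiftedTgen m n a) l r c = 0 := by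
  rw [linearCombination_shiftedTgen_apply]
  refine sum_eq_zero fun p hp => ?_
  rw [shiftedTgen_apply, if_neg (by have := hσ p hp; omega), mul_zero]

theorem linearCombination_shiftedTgen_apply_of_eq {σ : ℕ} (h : (r : ℕ) + c = σ + 3) :
    Finsupp.linearCombination ℂ (shiftedTgen m n a) l r c =
      (antidiagonalPoly l σ * Tpoly a).coeff r := by
  rw [linearCombination_shiftedTgen_apply, coeff_antidiagonalPoly_mul, sum_filter]
  refine sum_congr rfl fun p _ => ?_
  rw [shiftedTgen_apply]
  split_ifs <;> first | omega | simp

end linearCombination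

theorem four_le_rank_linearCombination_shiftedTgen {m n : ℕ} {a : ℝ} (ha : 2 < a)
    {l : ℕ × ℕ →₀ ℂ} (hl : ∀ p ∈ l.support, p.1 < m - 3 ∧ p.2 < n - 3) (hl0 : l ≠ 0) :
    4 ≤ (Finsupp.linearCombination ℂ (shiftedTgen m n a) l).rank := by
  obtain ⟨p₀, hp₀, hmin⟩ :=
    l.support.exists_min_image (fun p => p.1 + p.2) (Finsupp.support_nonempty_iff.mpr hl0)
  set σ := p₀.1 + p₀.2
  set F := antidiagonalPoly l σ * Tpoly a
  have hbound : ∀ e ∈ F.support, e < m ∧ e ≤ σ + 3 ∧ σ + 3 - e < n := fun e he => by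
    obtain ⟨p, hp, hpσ, hpe, hep⟩ := exists_of_mem_support_antidiagonalPoly_mul_Tpoly he
    have := hl p hp
    omega
  set R : Finset (Fin m) := {r | F.coeff r ≠ 0}
  have hFR : F.support ⊆ R.map Fin.valEmbedding := fun e he =>
    mem_map.mpr ⟨⟨e, (hbound e he).1⟩, by simpa [R] using he, rfl⟩
  calc 4 ≤ #F.support := four_le_card_support_mul_Tpoly ha (antidiagonalPoly_ne_zero hp₀)
    _ ≤ #R := (card_le_card hFR).trans_eq (card_map _)
    _ ≤ _ := by
      refine Matrix.card_le_rank_of_antidiagonal _ (σ + 3)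
        (fun r c => linearCombination_shiftedTgen_apply_of_lt l r c hmin) fun r hr => ?_
      have hr : (r : ℕ) ∈ F.support := mem_support_iff.mpr (mem_filter.mp hr).2
      have := hbound r hr
      have hrc : (r : ℕ) + (σ + 3 - r) = σ + 3 := by omega
      exact ⟨⟨σ + 3 - r, this.2.2⟩, hrc, by
        rw [linearCombination_shiftedTgen_apply_of_eq l r _ hrc]
        exact mem_support_iff.mp hr⟩

theorem stmt18_general (m n : ℕ) (a : ℝ) (ha : 4 < a) :
    (∀ M ∈ Submodule.span ℂ {M : Matrix (Fin m) (Fin n) ℂ |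
        ∃ i j : ℕ, 2 ≤ i ∧ i ≤ m - 2 ∧ 2 ≤ j ∧ j ≤ n - 2 ∧ M = Tgen m n a i j},
      M ≠ 0 → 4 ≤ M.rank) ∧
    Module.finrank ℂ (Submodule.span ℂ {M : Matrix (Fin m) (Fin n) ℂ |
        ∃ i j : ℕ, 2 ≤ i ∧ i ≤ m - 2 ∧ 2 ≤ j ∧ j ≤ n - 2 ∧ M = Tgen m n a i j}) =
      (m - 3) * (n - 3) := by
  set S := range (m - 3) ×ˢ range (n - 3)
  have hrank : ∀ l ∈ Finsupp.supported ℂ ℂ ↑S, l ≠ 0 →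
      4 ≤ (Finsupp.linearCombination ℂ (shiftedTgen m n a) l).rank := fun l hl =>
    four_le_rank_linearCombination_shiftedTgen (by linarith) fun p hp => by simpa [S] using hl hp
  have hli : LinearIndepOn ℂ (shiftedTgen m n a) ↑S := linearIndepOn_iff.mpr fun l hl hl0 =>
    by_contra fun hne => by simpa [hl0] using hrank l hl hne
  rw [setOf_Tgen_eq_image_shiftedTgen]
  refine ⟨fun M hM hM0 => ?_, ?_⟩
  · obtain ⟨l, hl, rfl⟩ := (Finsupp.mem_span_image_iff_linearCombination ℂ).mp hM
    exact hrank l hl (by rintro rfl; simp at hM0)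
  · rw [← coe_image, finrank_span_finset_eq_card (by rw [coe_image]; exact hli.id_image),
      card_image_of_injOn hli.injOn, card_product, card_range, card_range]

theorem stmt18 (m n : ℕ) (hm : 4 ≤ m) (hn : 4 ≤ n) (a : ℝ) (ha : 4 < a) :
    (∀ M ∈ Submodule.span ℂ {M : Matrix (Fin m) (Fin n) ℂ |
        ∃ i j : ℕ, 2 ≤ i ∧ i ≤ m - 2 ∧ 2 ≤ j ∧ j ≤ n - 2 ∧ M = Tgen m n a i j},
      M ≠ 0 → 4 ≤ M.rank) ∧
    Module.finrank ℂ (Submodule.span ℂ {M : Matrix (Fin m) (Fin n) ℂ |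
        ∃ i j : ℕ, 2 ≤ i ∧ i ≤ m - 2 ∧ 2 ≤ j ∧ j ≤ n - 2 ∧ M = Tgen m n a i j}) =
      (m - 3) * (n - 3) :=
  stmt18_general m n a ha
end
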